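/- arXiv:1911.11171 — 5 statements merged into one kernel-verified Lean document; each statement's English description precedes it below -/
import Mathlib

section
/- Let (M,b) be a linear constraint system over ℤ_d with d > 1. Then (M,b) admits a quantum solution on some nonzero complex Hilbert space if and only if the element J of the solution group 𝒢(M,b) has order exactly d. -/
/-- ω = exp(2πi/d). -/
noncomputable def rootOfUnity (d : ℕ) : ℂ := Complex.exp (2 * Real.pi * Complex.I / d)

/-- A quantum solution to the linear constraint system `(M, b)` over `ℤ_d` on a complex
Hilbert space `H`: bounded operators `A i` with `A i ^ d = 1`, commuting whenever two
variables appear in a common constraint, and with `∏ j, A j ^ M i j = ω ^ b i • 1` for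
every row `i`. -/
def IsQuantumSolution (d : ℕ) {m n : ℕ} (M : Matrix (Fin m) (Fin n) (ZMod d))
    (b : Fin m → ZMod d) {H : Type} [NormedAddCommGroup H] [InnerProductSpace ℂ H]
    (A : Fin n → H →L[ℂ] H) : Prop :=
  (∀ i, A i ^ d = 1) ∧
  (∀ j k : Fin n, (∃ i, M i j ≠ 0 ∧ M i k ≠ 0) → Commute (A j) (A k)) ∧
  (∀ i : Fin m, (List.ofFn fun j => A j ^ (M i j).val).prod
      = rootOfUnity d ^ (b i).val • (1 : H →L[ℂ] H))

/-- `(M,b)` admits a quantum solution on some nonzero complex Hilbert space. -/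
def HasQuantumSolution (d : ℕ) {m n : ℕ} (M : Matrix (Fin m) (Fin n) (ZMod d))
    (b : Fin m → ZMod d) : Prop :=
  ∃ (H : Type) (_ : NormedAddCommGroup H) (_ : InnerProductSpace ℂ H)
    (_ : CompleteSpace H) (_ : Nontrivial H) (A : Fin n → H →L[ℂ] H),
    IsQuantumSolution d M b A

/-- The defining relations of the solution group of the LCS `(M,b)` over `ℤ_d`, on the
generators `none = J` and `some i = gᵢ`:  `J^d = gᵢ^d = e`, `J` is central,
`g_j g_k = g_k g_j` whenever variables `j,k` share a constraint, and
`J^{-bᵢ} ∏_j g_j^{M i j} = e` for every row `i`. -/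
def lcsRels (d : ℕ) {m n : ℕ} (M : Matrix (Fin m) (Fin n) (ZMod d)) (b : Fin m → ZMod d) :
    Set (FreeGroup (Option (Fin n))) :=
  {w | (∃ x : Option (Fin n), w = FreeGroup.of x ^ d) ∨
    (∃ i : Fin n, w = FreeGroup.of (none : Option (Fin n)) * FreeGroup.of (some i) *
        (FreeGroup.of (none : Option (Fin n)))⁻¹ * (FreeGroup.of (some i))⁻¹) ∨
    (∃ j k : Fin n, (∃ i, M i j ≠ 0 ∧ M i k ≠ 0) ∧
        w = FreeGroup.of (some j) * FreeGroup.of (some k) *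
          (FreeGroup.of (some j))⁻¹ * (FreeGroup.of (some k))⁻¹) ∨
    (∃ i : Fin m, w = (FreeGroup.of (none : Option (Fin n)) ^ (b i).val)⁻¹ *
        (List.ofFn fun j => FreeGroup.of (some j) ^ (M i j).val).prod)}

/-- The solution group `𝒢(M,b)`; `PresentedGroup.of none` is `J` and
`PresentedGroup.of (some i)` is the generator `gᵢ`. -/
abbrev SolutionGroup (d : ℕ) {m n : ℕ} (M : Matrix (Fin m) (Fin n) (ZMod d))
    (b : Fin m → ZMod d) := PresentedGroup (lcsRels d M b)

/-!
A quantum solution is the same thing as a representation of `𝒢(M,b)` by bounded operators in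
which `J` acts as the scalar `ω`. Since `ω` has order `d` and `J ^ d = e`, such a representation
on a nonzero space forces `J` to have order exactly `d`.

Conversely, if `J` has order `d`, then `f = ∑_{k<d} ω⁻ᵏ δ_{Jᵏ}` is a nonzero vector of `ℓ²(𝒢)`
on which left translation by `J` acts as `ω`: translation shifts the sum cyclically. As `J` is
central, the `ω`-eigenspace of `J` in the left regular representation is a nonzero Hilbert space
invariant under `𝒢`, and `𝒢` acts on it with `J` acting as `ω`.
-/

open scoped ENNReal

theorem Memℓp.comp_equiv {α β E : Type*} [NormedAddCommGroup E] {p : ℝ≥0∞} {f : β → E}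
    (hf : Memℓp f p) (e : α ≃ β) : Memℓp (f ∘ e) p := by
  rcases p.trichotomy with rfl | rfl | hp
  · exact memℓp_zero (hf.finite_dsupport.preimage e.injective.injOn)
  · obtain ⟨C, hC⟩ := hf.bddAbove
    exact memℓp_infty ⟨C, by rintro _ ⟨a, rfl⟩; exact hC ⟨e a, rfl⟩⟩
  · exact memℓp_gen (e.summable_iff.mpr (hf.summable hp))

theorem Finset.sum_range_shift_of_eq {M : Type*} [AddCommMonoid M] [IsRightCancelAdd M]
    (φ : ℕ → M) {d : ℕ} (h : φ d = φ 0) :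
    ∑ k ∈ Finset.range d, φ (k + 1) = ∑ k ∈ Finset.range d, φ k := by
  refine add_right_cancel (b := φ 0) ?_
  rw [← Finset.sum_range_succ', Finset.sum_range_succ, h]

namespace lp

variable {α β 𝕜 E : Type*} [NormedField 𝕜] [NormedAddCommGroup E] [NormedSpace 𝕜 E]
  {p : ℝ≥0∞} [Fact (1 ≤ p)]

variable (𝕜 E p) in
noncomputable def compEquiv (e : α ≃ β) : lp (fun _ : β => E) p ≃ₗᵢ[𝕜] lp (fun _ : α => E) p where
  toFun f := ⟨f ∘ e, (lp.memℓp f).comp_equiv e⟩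
  invFun f := ⟨f ∘ e.symm, (lp.memℓp f).comp_equiv e.symm⟩
  map_add' _ _ := rfl
  map_smul' _ _ := rfl
  left_inv f := lp.ext (funext fun b => congrArg f (e.apply_symm_apply b))
  right_inv f := lp.ext (funext fun a => congrArg f (e.symm_apply_apply a))
  norm_map' f := by
    rcases p.trichotomy with rfl | rfl | hp
    · exact absurd (Fact.out : (1 : ℝ≥0∞) ≤ 0) (by norm_num)
    · rw [lp.norm_eq_ciSup, lp.norm_eq_ciSup]
      exact e.iSup_comp (g := fun b => ‖f b‖)
    · rw [lp.norm_eq_tsum_rpow hp, lp.norm_eq_tsum_rpow hp]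
      exact congrArg (· ^ _) (e.tsum_eq (fun b => ‖f b‖ ^ p.toReal))

@[simp]
theorem compEquiv_apply (e : α ≃ β) (f : lp (fun _ : β => E) p) (a : α) :
    compEquiv 𝕜 E p e f a = f (e a) := rfl

variable (𝕜 E p) in
noncomputable def leftRegular (G : Type*) [Group G] :
    G →* (lp (fun _ : G => E) p →L[𝕜] lp (fun _ : G => E) p) where
  toFun g := (compEquiv 𝕜 E p (Equiv.mulLeft g⁻¹)).toContinuousLinearEquiv.toContinuousLinearMap
  map_one' := by ext; simp
  map_mul' g h := by ext; simp

theorem leftRegular_apply {G : Type*} [Group G] (g : G) (f : lp (fun _ : G => E) p) (x : G) :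
    leftRegular 𝕜 E p G g f x = f (g⁻¹ * x) := rfl

theorem leftRegular_single {G : Type*} [Group G] [DecidableEq G] (g a : G) (v : E) :
    leftRegular 𝕜 E p G g (lp.single p a v) = lp.single p (g * a) v := by
  ext x
  simp [leftRegular_apply, Pi.single_apply, inv_mul_eq_iff_eq_mul]

open Finset Module.End in
theorem nontrivial_eigenspace_leftRegular {G : Type*} [Group G] {z : G} (hz : IsOfFinOrder z)
    {c : 𝕜} (hc : c ^ orderOf z = 1) :
    Nontrivial (eigenspace (leftRegular 𝕜 𝕜 p G z : lp (fun _ : G => 𝕜) p →ₗ[𝕜] _) c) := by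
  classical
  set d := orderOf z
  have hd : 0 < d := hz.orderOf_pos
  have hc0 : c ≠ 0 := by rintro rfl; simp [hd.ne'] at hc
  let φ : ℕ → lp (fun _ : G => 𝕜) p := fun k => c⁻¹ ^ k • lp.single p (z ^ k) 1
  have hf0 : ∑ k ∈ range d, φ k ≠ 0 := fun h => by
    have h1 := congrArg (fun f : lp (fun _ : G => 𝕜) p => f 1) h
    simp only [lp.coeFn_sum, Finset.sum_apply, lp.coeFn_zero, Pi.zero_apply, φ] at h1
    rw [sum_eq_single 0] at h1
    · simp at h1
    · intro k hk hk0
      simp [pow_ne_one_of_lt_orderOf hk0 (mem_range.mp hk)]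
    · simp [hd]
  have hφ : φ d = φ 0 := by simp [φ, d, hc, pow_orderOf_eq_one]
  have hf : leftRegular 𝕜 𝕜 p G z (∑ k ∈ range d, φ k) = c • ∑ k ∈ range d, φ k :=
    calc leftRegular 𝕜 𝕜 p G z (∑ k ∈ range d, φ k)
        = c • ∑ k ∈ range d, φ (k + 1) := by
          simp only [map_sum, map_smul, leftRegular_single, smul_sum, smul_smul, φ,
            ← pow_succ']
          congr! 2 with k
          rw [pow_succ, mul_comm, mul_assoc, inv_mul_cancel₀ hc0, mul_one]
      _ = c • ∑ k ∈ range d, φ k := by rw [sum_range_shift_of_eq φ hφ]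
  exact nontrivial_of_ne ⟨_, mem_eigenspace_iff.mpr hf⟩ 0 (by simpa using hf0)

end lp

namespace MonoidHom

open Module.End

variable {G 𝕜 E : Type*} [Monoid G] [NormedField 𝕜] [NormedAddCommGroup E] [NormedSpace 𝕜 E]

theorem mapsTo_eigenspace_of_commute (ρ : G →* (E →L[𝕜] E)) {z g : G} (h : Commute z g) (c : 𝕜) :
    ∀ x ∈ eigenspace (ρ z : E →ₗ[𝕜] E) c, ρ g x ∈ eigenspace (ρ z : E →ₗ[𝕜] E) c := by
  intro x hx
  rw [mem_eigenspace_iff] at hx ⊢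
  calc ρ z (ρ g x) = ρ (z * g) x := by rw [map_mul]; rfl
    _ = ρ g (ρ z x) := by rw [h.eq, map_mul]; rfl
    _ = c • ρ g x := by rw [← map_smul, ← hx]; rfl

def restrictEigenspace (ρ : G →* (E →L[𝕜] E)) {z : G} (hz : ∀ g, Commute z g) (c : 𝕜) :
    G →* (eigenspace (ρ z : E →ₗ[𝕜] E) c →L[𝕜] eigenspace (ρ z : E →ₗ[𝕜] E) c) where
  toFun g := (ρ g).restrict (ρ.mapsTo_eigenspace_of_commute (hz g) c)
  map_one' := by ext; simp
  map_mul' g h := by ext; simp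

theorem restrictEigenspace_apply_self (ρ : G →* (E →L[𝕜] E)) {z : G} (hz : ∀ g, Commute z g)
    (c : 𝕜) : ρ.restrictEigenspace hz c z = c • 1 := by
  ext x
  exact mem_eigenspace_iff.mp x.2

end MonoidHom

namespace SolutionGroup

variable {d m n : ℕ} {M : Matrix (Fin m) (Fin n) (ZMod d)} {b : Fin m → ZMod d}

theorem of_pow_eq_one (x : Option (Fin n)) : (PresentedGroup.of x : SolutionGroup d M b) ^ d = 1 :=
  (map_pow _ _ _).symm.trans (PresentedGroup.one_of_mem (Or.inl ⟨x, rfl⟩))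

theorem commute_of_none_of_some (i : Fin n) :
    Commute (PresentedGroup.of none : SolutionGroup d M b) (PresentedGroup.of (some i)) := by
  have h := PresentedGroup.one_of_mem (rels := lcsRels d M b) (Or.inr (Or.inl ⟨i, rfl⟩))
  rw [map_mul, map_mul, map_mul, map_inv, map_inv, ← commutatorElement_def,
    commutatorElement_eq_one_iff_commute] at h
  exact h

theorem commute_of_some_of_some {j k : Fin n} (hjk : ∃ i, M i j ≠ 0 ∧ M i k ≠ 0) :
    Commute (PresentedGroup.of (some j) : SolutionGroup d M b) (PresentedGroup.of (some k)) := by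
  have h := PresentedGroup.one_of_mem (rels := lcsRels d M b)
    (Or.inr (Or.inr (Or.inl ⟨j, k, hjk, rfl⟩)))
  rw [map_mul, map_mul, map_mul, map_inv, map_inv, ← commutatorElement_def,
    commutatorElement_eq_one_iff_commute] at h
  exact h

theorem prod_ofFn_of_pow (i : Fin m) :
    (List.ofFn fun j => (PresentedGroup.of (some j) : SolutionGroup d M b) ^ (M i j).val).prod =
      PresentedGroup.of none ^ (b i).val := by
  have h := PresentedGroup.one_of_mem (rels := lcsRels d M b) (Or.inr (Or.inr (Or.inr ⟨i, rfl⟩)))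
  rw [map_mul, map_inv, inv_mul_eq_one, map_list_prod, List.map_ofFn] at h
  simpa [Function.comp_def, PresentedGroup.of] using h.symm

theorem commute_of_none (x : SolutionGroup d M b) : Commute (PresentedGroup.of none) x := by
  refine PresentedGroup.generated_by _ (Subgroup.centralizer {PresentedGroup.of none}) ?_ x
    (PresentedGroup.of none) rfl
  rintro (_ | i) _ rfl
  · rfl
  · exact (commute_of_none_of_some i).eq

theorem exists_hom_of_relations {K : Type*} [Monoid K] (hd : d ≠ 0) {c : K} {A : Fin n → K}
    (hc : c ^ d = 1) (hA : ∀ i, A i ^ d = 1) (hcA : ∀ i, Commute c (A i))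
    (hAA : ∀ j k, (∃ i, M i j ≠ 0 ∧ M i k ≠ 0) → Commute (A j) (A k))
    (hrow : ∀ i, (List.ofFn fun j => A j ^ (M i j).val).prod = c ^ (b i).val) :
    ∃ τ : SolutionGroup d M b →* K,
      τ (PresentedGroup.of none) = c ∧ ∀ i, τ (PresentedGroup.of (some i)) = A i := by
  let a : Option (Fin n) → K := fun x => x.elim c A
  let u : Option (Fin n) → Kˣ := fun x =>
    Units.ofPowEqOne (a x) d (by cases x <;> simp [a, hc, hA]) hd
  have hrels : ∀ r ∈ lcsRels d M b, FreeGroup.lift u r = 1 := by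
    rintro r (⟨x, rfl⟩ | ⟨i, rfl⟩ | ⟨j, k, hjk, rfl⟩ | ⟨i, rfl⟩)
    · simp [u]
    · simpa [← commutatorElement_def, commutatorElement_eq_one_iff_commute] using
        Commute.units_of_val (hcA i)
    · simpa [← commutatorElement_def, commutatorElement_eq_one_iff_commute] using
        Commute.units_of_val (hAA j k hjk)
    · rw [map_mul, map_inv, inv_mul_eq_one]
      apply Units.val_injective
      change Units.coeHom K _ = Units.coeHom K _
      simp only [map_pow, map_list_prod, List.map_ofFn, Function.comp_def,
        FreeGroup.lift_apply_of]
      exact (hrow i).symm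
  exact ⟨(Units.coeHom K).comp (PresentedGroup.toGroup hrels), by simp [u, a],
    fun i => by simp [u, a]⟩

variable {H : Type} [NormedAddCommGroup H] [InnerProductSpace ℂ H]

theorem isQuantumSolution_of_hom (τ : SolutionGroup d M b →* (H →L[ℂ] H))
    (hτ : τ (PresentedGroup.of none) = rootOfUnity d • 1) :
    IsQuantumSolution d M b fun i => τ (PresentedGroup.of (some i)) := by
  refine ⟨fun i => ?_, fun j k hjk => (commute_of_some_of_some hjk).map τ, fun i => ?_⟩
  · rw [← map_pow, of_pow_eq_one, map_one]
  · calc (List.ofFn fun j => τ (PresentedGroup.of (some j)) ^ (M i j).val).prod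
        = τ (List.ofFn fun j => PresentedGroup.of (some j) ^ (M i j).val).prod := by
          rw [map_list_prod, List.map_ofFn]
          simp only [Function.comp_def, map_pow]
      _ = τ (PresentedGroup.of none) ^ (b i).val := by rw [prod_ofFn_of_pow, map_pow]
      _ = rootOfUnity d ^ (b i).val • 1 := by rw [hτ, smul_pow, one_pow]

theorem exists_hom_of_isQuantumSolution (hd : d ≠ 0) {A : Fin n → H →L[ℂ] H}
    (hA : IsQuantumSolution d M b A) :
    ∃ τ : SolutionGroup d M b →* (H →L[ℂ] H),
      τ (PresentedGroup.of none) = rootOfUnity d • 1 ∧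
        ∀ i, τ (PresentedGroup.of (some i)) = A i := by
  obtain ⟨hpow, hcomm, hrow⟩ := hA
  have hω : rootOfUnity d ^ d = 1 := (Complex.isPrimitiveRoot_exp d hd).pow_eq_one
  refine exists_hom_of_relations hd (by rw [smul_pow, one_pow, hω, one_smul]) hpow
    (fun i => (Commute.one_left _).smul_left _) hcomm (fun i => ?_)
  rw [hrow, smul_pow, one_pow]

theorem orderOf_of_none_eq_of_hom [Nontrivial H] (hd : d ≠ 0)
    (τ : SolutionGroup d M b →* (H →L[ℂ] H))
    (hτ : τ (PresentedGroup.of none) = rootOfUnity d • 1) :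
    orderOf (PresentedGroup.of none : SolutionGroup d M b) = d := by
  refine Nat.dvd_antisymm (orderOf_dvd_of_pow_eq_one (of_pow_eq_one none)) ?_
  calc d = orderOf (rootOfUnity d) := (Complex.isPrimitiveRoot_exp d hd).eq_orderOf
    _ = orderOf (algebraMap ℂ (H →L[ℂ] H) (rootOfUnity d)) :=
      (orderOf_injective (algebraMap ℂ (H →L[ℂ] H)).toMonoidHom
        (algebraMap ℂ (H →L[ℂ] H)).injective _).symm
    _ = orderOf (τ (PresentedGroup.of none)) := by rw [hτ, Algebra.algebraMap_eq_smul_one]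
    _ ∣ orderOf (PresentedGroup.of none : SolutionGroup d M b) := orderOf_map_dvd τ _

end SolutionGroup

open SolutionGroup in
/-- for `d > 1`, the LCS `(M,b)` over `ℤ_d` admits a quantum solution on
some nonzero complex Hilbert space iff the element `J` of the solution group `𝒢(M,b)`
has order exactly `d`. -/
theorem hasQuantumSolution_iff_orderOf_J_eq (d : ℕ) (hd : 1 < d) {m n : ℕ}
    (M : Matrix (Fin m) (Fin n) (ZMod d)) (b : Fin m → ZMod d) :
    HasQuantumSolution d M b ↔
      orderOf (PresentedGroup.of (none : Option (Fin n)) : SolutionGroup d M b) = d := by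
  have hd0 : d ≠ 0 := by omega
  constructor
  · rintro ⟨H, _, _, _, _, A, hA⟩
    obtain ⟨τ, hτ, -⟩ := exists_hom_of_isQuantumSolution hd0 hA
    exact orderOf_of_none_eq_of_hom hd0 τ hτ
  · intro h
    have hJ : IsOfFinOrder (PresentedGroup.of none : SolutionGroup d M b) :=
      orderOf_pos_iff.mp (by omega)
    have hV := lp.nontrivial_eigenspace_leftRegular (𝕜 := ℂ) (p := 2) hJ
      (by rw [h]; exact (Complex.isPrimitiveRoot_exp d hd0).pow_eq_one)
    exact ⟨_, _, _, inferInstance, hV, _, isQuantumSolution_of_hom _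
      ((lp.leftRegular ℂ ℂ 2 _).restrictEigenspace_apply_self commute_of_none _)⟩
end

section
/- Let d be odd and let (M,b) be a linear constraint system over ℤ_d whose solution group 𝒢(M,b) has a phase-commutation relation, i.e. there are generators g, h of 𝒢(M,b) and a, b', c ∈ ℤ_d with c ≠ 0 such that g^a h^{b'} = J^c h^{b'} g^a holds in 𝒢(M,b). Then (M,b) has no quantum solution on any nonzero complex Hilbert space. -/
/-!
A quantum solution `A` yields, for every `k`, a representation of `𝒢(M,b)` by
`gᵢ ↦ Aᵢ ^ k`, `J ↦ ω ^ k`: the variables of a row commute, so the `k`-th power of a row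
relation is again a row relation. Put `X = A i₁ ^ a`, `Y = A i₂ ^ b'`, `W = ω ^ c`. The
representation with `k = 1` gives `X Y = W Y X`, hence `X² Y² = W⁴ Y² X²`, while the one with
`k = 2` gives `X² Y² = W² Y² X²`. So `ω ^ (2c) = 1`, i.e. `d ∣ 2c`, and since `d` is odd,
`c = 0`.
-/

theorem List.prod_map_pow_of_pairwise_commute {M : Type*} [Monoid M] (k : ℕ) :
    ∀ {l : List M}, l.Pairwise Commute → (l.map (· ^ k)).prod = l.prod ^ k
  | [], _ => by simp
  | x :: l, h => by
    rw [List.pairwise_cons] at h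
    rw [List.map_cons, List.prod_cons, List.prod_cons, prod_map_pow_of_pairwise_commute k h.2,
      (Commute.list_prod_right _ _ h.1).mul_pow]

theorem pow_mul_pow_eq_of_mul_eq_central_mul {G : Type*} [Monoid G] {x y w : G}
    (hwx : Commute w x) (hwy : Commute w y) (h : x * y = w * (y * x)) (p q : ℕ) :
    x ^ p * y ^ q = w ^ (p * q) * (y ^ q * x ^ p) := by
  have hxy : SemiconjBy x (y ^ q) (w ^ q * y ^ q) := by
    rw [← hwy.mul_pow]
    exact SemiconjBy.pow_right (by rw [SemiconjBy, mul_assoc, ← h]) q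
  induction p with
  | zero => simp
  | succ p ih =>
    calc x ^ (p + 1) * y ^ q = x ^ p * (w ^ q * y ^ q) * x := by
          rw [pow_succ, mul_assoc, hxy.eq, ← mul_assoc]
      _ = w ^ q * (x ^ p * y ^ q) * x := by
          rw [← mul_assoc, (hwx.pow_pow q p).symm.eq]
          simp only [mul_assoc]
      _ = w ^ ((p + 1) * q) * (y ^ q * x ^ (p + 1)) := by
        rw [ih, add_mul, one_mul, pow_add, (Commute.pow_pow_self w _ _).eq, pow_succ]
        simp only [mul_assoc]

theorem sq_eq_one_of_mul_eq_central_mul {G : Type*} [Group G] {x y w : G}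
    (hwx : Commute w x) (hwy : Commute w y) (h : x * y = w * (y * x))
    (h_sq : x ^ 2 * y ^ 2 = w ^ 2 * (y ^ 2 * x ^ 2)) : w ^ 2 = 1 := by
  have h4 : w ^ 2 * w ^ 2 * (y ^ 2 * x ^ 2) = w ^ 2 * (y ^ 2 * x ^ 2) := by
    rw [← pow_add, ← h_sq, pow_mul_pow_eq_of_mul_eq_central_mul hwx hwy h]
  rwa [mul_right_cancel_iff, mul_eq_left] at h4

/-- Elements of `G` satisfying the defining relations of `𝒢(M,b)`, i.e. the images of the
generators under a homomorphism `𝒢(M,b) →* G`. -/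
structure IsGroupSolution (d : ℕ) {m n : ℕ} (M : Matrix (Fin m) (Fin n) (ZMod d))
    (b : Fin m → ZMod d) {G : Type*} [Group G] (J : G) (g : Fin n → G) : Prop where
  pow_J : J ^ d = 1
  pow_g : ∀ i, g i ^ d = 1
  commute_J : ∀ i, Commute J (g i)
  commute_g : ∀ j k, (∃ i, M i j ≠ 0 ∧ M i k ≠ 0) → Commute (g j) (g k)
  row_prod : ∀ i, (List.ofFn fun j => g j ^ (M i j).val).prod = J ^ (b i).val

namespace IsGroupSolution

variable {d m n : ℕ} {M : Matrix (Fin m) (Fin n) (ZMod d)} {b : Fin m → ZMod d}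
  {G : Type*} [Group G] {J : G} {g : Fin n → G}

theorem pairwise_commute_row (hs : IsGroupSolution d M b J g) (i : Fin m) :
    (List.ofFn fun j => g j ^ (M i j).val).Pairwise Commute := by
  rw [List.pairwise_ofFn]
  intro j k _
  by_cases hj : M i j = 0
  · simp [hj]
  by_cases hk : M i k = 0
  · simp [hk]
  exact (hs.commute_g j k ⟨i, hj, hk⟩).pow_pow _ _

theorem pow (hs : IsGroupSolution d M b J g) (k : ℕ) :
    IsGroupSolution d M b (J ^ k) (fun i => g i ^ k) where
  pow_J := by rw [pow_right_comm, hs.pow_J, one_pow]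
  pow_g i := by rw [pow_right_comm, hs.pow_g, one_pow]
  commute_J i := (hs.commute_J i).pow_pow k k
  commute_g j l hjl := (hs.commute_g j l hjl).pow_pow k k
  row_prod i := by
    simp only [pow_right_comm _ k]
    have := List.prod_map_pow_of_pairwise_commute k (hs.pairwise_commute_row i)
    rwa [List.map_ofFn, hs.row_prod] at this

theorem lift_eq_one_of_mem_lcsRels (hs : IsGroupSolution d M b J g) :
    ∀ r ∈ lcsRels d M b, FreeGroup.lift (fun x => Option.elim x J g) r = 1 := by
  rintro r (⟨x | i, rfl⟩ | ⟨i, rfl⟩ | ⟨j, k, hjk, rfl⟩ | ⟨i, rfl⟩)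
  · simpa using hs.pow_J
  · simpa using hs.pow_g i
  · simpa [← commutatorElement_def, commutatorElement_eq_one_iff_commute] using
      hs.commute_J i
  · simpa [← commutatorElement_def, commutatorElement_eq_one_iff_commute] using
      hs.commute_g j k hjk
  · simpa [map_list_prod, List.map_ofFn, Function.comp_def, inv_mul_eq_one] using
      (hs.row_prod i).symm

def toHom (hs : IsGroupSolution d M b J g) : SolutionGroup d M b →* G :=
  PresentedGroup.toGroup hs.lift_eq_one_of_mem_lcsRels

@[simp]
theorem toHom_of_none (hs : IsGroupSolution d M b J g) :
    hs.toHom (PresentedGroup.of none) = J :=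
  PresentedGroup.toGroup.of _

@[simp]
theorem toHom_of_some (hs : IsGroupSolution d M b J g) (i : Fin n) :
    hs.toHom (PresentedGroup.of (some i)) = g i :=
  PresentedGroup.toGroup.of _

end IsGroupSolution

theorem isPrimitiveRoot_rootOfUnity {d : ℕ} (hd : d ≠ 0) : IsPrimitiveRoot (rootOfUnity d) d :=
  Complex.isPrimitiveRoot_exp d hd

theorem IsQuantumSolution.isGroupSolution {d m n : ℕ} {M : Matrix (Fin m) (Fin n) (ZMod d)}
    {b : Fin m → ZMod d} {H : Type} [NormedAddCommGroup H] [InnerProductSpace ℂ H]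
    {A : Fin n → H →L[ℂ] H} (hA : IsQuantumSolution d M b A) (hd : d ≠ 0) :
    IsGroupSolution d M b
      (Units.ofPowEqOne (algebraMap ℂ (H →L[ℂ] H) (rootOfUnity d)) d
        (by rw [← map_pow, (isPrimitiveRoot_rootOfUnity hd).pow_eq_one, map_one]) hd)
      (fun i => Units.ofPowEqOne (A i) d (hA.1 i) hd) where
  pow_J := Units.pow_ofPowEqOne _ _
  pow_g _ := Units.pow_ofPowEqOne _ _
  commute_J i :=
    Commute.units_val_iff.mp (by simpa using Algebra.commute_algebraMap_left _ (A i))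
  commute_g j k hjk := Commute.units_val_iff.mp (by simpa using hA.2.1 j k hjk)
  row_prod i := by
    apply Units.val_injective
    rw [← Units.coeHom_apply, map_list_prod, List.map_ofFn, Units.val_pow_eq_pow_val,
      Units.val_ofPowEqOne, ← map_pow, Algebra.algebraMap_eq_smul_one, ← hA.2.2 i]
    simp [Function.comp_def]

theorem eq_zero_of_rootOfUnity_pow_two_mul_val_eq_one {d : ℕ} (hd : Odd d) {c : ZMod d}
    (h : rootOfUnity d ^ (2 * c.val) = 1) : c = 0 := by
  have hd0 : d ≠ 0 := hd.pos.ne'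
  have : NeZero d := ⟨hd0⟩
  have h2c : d ∣ 2 * c.val := (isPrimitiveRoot_rootOfUnity hd0).pow_eq_one_iff_dvd _ |>.mp h
  rw [← ZMod.natCast_zmod_val c, ZMod.natCast_eq_zero_iff]
  exact (Nat.coprime_two_right.mpr hd).dvd_of_dvd_mul_left h2c

/-- for `d` odd, if the solution group of the LCS `(M,b)` over `ℤ_d` has a
phase-commutation relation `g^a h^{b'} = J^c h^{b'} g^a` with `c ≠ 0`, then `(M,b)` has
no quantum solution on any nonzero complex Hilbert space. -/
theorem no_quantum_solution_of_phase_commutation (d : ℕ) (hd : Odd d) {m n : ℕ}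
    (M : Matrix (Fin m) (Fin n) (ZMod d)) (b : Fin m → ZMod d)
    (i₁ i₂ : Fin n) (a b' c : ZMod d) (hc : c ≠ 0)
    (hrel : (PresentedGroup.of (some i₁) : SolutionGroup d M b) ^ a.val *
          PresentedGroup.of (some i₂) ^ b'.val
        = PresentedGroup.of (none : Option (Fin n)) ^ c.val *
          (PresentedGroup.of (some i₂) ^ b'.val *
            PresentedGroup.of (some i₁) ^ a.val)) :
    ¬ HasQuantumSolution d M b := by
  rintro ⟨H, _, _, _, _, A, hA⟩
  obtain ⟨J, g, hs, hJ⟩ : ∃ (J : (H →L[ℂ] H)ˣ) (g : Fin n → (H →L[ℂ] H)ˣ),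
      IsGroupSolution d M b J g ∧ (J : H →L[ℂ] H) = algebraMap ℂ _ (rootOfUnity d) :=
    ⟨_, _, hA.isGroupSolution hd.pos.ne', rfl⟩
  have h₁ := congrArg hs.toHom hrel
  have h₂ := congrArg (hs.pow 2).toHom hrel
  simp only [map_mul, map_pow, IsGroupSolution.toHom_of_some, IsGroupSolution.toHom_of_none]
    at h₁ h₂
  simp only [pow_right_comm _ 2] at h₂
  have hJc : ∀ i (k : ℕ), Commute (J ^ c.val) (g i ^ k) := fun i _ =>
    (hs.commute_J i).pow_pow _ _
  have hsq := sq_eq_one_of_mul_eq_central_mul (hJc i₁ _) (hJc i₂ _) h₁ h₂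
  apply hc (eq_zero_of_rootOfUnity_pow_two_mul_val_eq_one hd _)
  apply (algebraMap ℂ (H →L[ℂ] H)).injective
  simpa [← pow_mul, mul_comm, hJ] using congrArg Units.val hsq
end

section
/- Let d be odd and let (M,b) be a linear constraint system over ℤ_d. Suppose there are generators g_{i_1}, …, g_{i_k} of the solution group 𝒢(M,b) and exponents a_1, …, a_k, c ∈ ℤ_d with c ≠ 0 such that g_{i_1}^{a_1} g_{i_2}^{a_2} ⋯ g_{i_k}^{a_k} = J^c g_{i_k}^{a_k} ⋯ g_{i_2}^{a_2} g_{i_1}^{a_1} holds in 𝒢(M,b). Then J^{2c} = e in 𝒢(M,b), and (M,b) has no quantum solution on any nonzero complex Hilbert space. -/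
open MulOpposite

theorem List.ofFn_comp_rev {α : Type*} {k : ℕ} (f : Fin k → α) :
    (List.ofFn fun t : Fin k => f t.rev) = (List.ofFn f).reverse := by
  apply List.ext_getElem
  · simp
  · intro i _ _
    simp only [List.getElem_ofFn, List.getElem_reverse, List.length_ofFn]
    congr 1
    ext
    simp only [Fin.val_rev]
    omega

theorem List.prod_reverse_of_pairwise_commute {G : Type*} [Monoid G] {l : List G}
    (h : l.Pairwise Commute) : l.reverse.prod = l.prod :=
  (List.reverse_perm l).prod_eq' (List.pairwise_reverse.mpr (h.imp Commute.symm))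

theorem sq_eq_one_of_eq_mul_of_eq_mul {G : Type*} [Group G] {z u v : G} (hzu : Commute z u)
    (huv : u = z * v) (hvu : v = u * z) : z ^ 2 = 1 := by
  rwa [hvu, ← mul_assoc, hzu.eq, mul_assoc, left_eq_mul, ← sq] at huv

theorem pow_zmodVal_eq_pow {G : Type*} [Monoid G] {d : ℕ} [NeZero d] {x : G} (hx : x ^ d = 1)
    {a : ZMod d} {n : ℕ} (h : (n : ZMod d) = a) : x ^ a.val = x ^ n :=
  pow_eq_pow_of_modEq ((ZMod.natCast_eq_natCast_iff _ _ _).mp (by simp [h])) hx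

theorem ZMod.isUnit_two_of_odd {d : ℕ} (hd : Odd d) : IsUnit (2 : ZMod d) := by
  simpa using (ZMod.isUnit_iff_coprime 2 d).mpr (Nat.coprime_two_left.mpr hd)

theorem rootOfUnity_isPrimitiveRoot (d : ℕ) [NeZero d] : IsPrimitiveRoot (rootOfUnity d) d :=
  Complex.isPrimitiveRoot_exp d (NeZero.ne d)

theorem rootOfUnity_pow_val_eq_one_iff {d : ℕ} [NeZero d] {x : ZMod d} :
    rootOfUnity d ^ x.val = 1 ↔ x = 0 := by
  rw [(rootOfUnity_isPrimitiveRoot d).pow_eq_one_iff_dvd,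
    ← ZMod.natCast_eq_zero_iff, ZMod.natCast_zmod_val]

structure SatisfiesLCS {G : Type*} [Monoid G] {m n : ℕ} (d : ℕ)
    (M : Matrix (Fin m) (Fin n) (ZMod d)) (b : Fin m → ZMod d) (f : Option (Fin n) → G) :
    Prop where
  pow_eq_one : ∀ x, f x ^ d = 1
  commute_none : ∀ i, Commute (f none) (f (some i))
  commute_of_row : ∀ j k, (∃ i, M i j ≠ 0 ∧ M i k ≠ 0) → Commute (f (some j)) (f (some k))
  row_prod : ∀ i, (List.ofFn fun j => f (some j) ^ (M i j).val).prod = f none ^ (b i).val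

section

variable {d m n : ℕ} {M : Matrix (Fin m) (Fin n) (ZMod d)} {b : Fin m → ZMod d}

theorem SatisfiesLCS.op {G : Type*} [Monoid G] {f : Option (Fin n) → G}
    (hf : SatisfiesLCS d M b f) :
    SatisfiesLCS d M b fun x => op (f x) where
  pow_eq_one x := by rw [← op_pow, hf.pow_eq_one, op_one]
  commute_none i := (hf.commute_none i).op
  commute_of_row j k hjk := (hf.commute_of_row j k hjk).op
  row_prod i := by
    have hrow : (List.ofFn fun j => f (some j) ^ (M i j).val).Pairwise Commute := by
      refine List.pairwise_ofFn.mpr fun j k _ => ?_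
      by_cases hj : M i j = 0
      · simp [hj]
      by_cases hk : M i k = 0
      · simp [hk]
      exact (hf.commute_of_row j k ⟨i, hj, hk⟩).pow_pow _ _
    rw [← op_pow, ← hf.row_prod i, ← List.prod_reverse_of_pairwise_commute hrow,
      MulOpposite.op_list_prod, List.map_reverse, List.reverse_reverse, List.map_ofFn]
    simp only [Function.comp_def, op_pow]

theorem satisfiesLCS_iff_lift_eq_one {G : Type*} [Group G] {f : Option (Fin n) → G} :
    SatisfiesLCS d M b f ↔ ∀ r ∈ lcsRels d M b, FreeGroup.lift f r = 1 := by
  simp only [lcsRels, Set.mem_ofPred_eq]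
  constructor
  · rintro ⟨hpow, hnone, hrow_comm, hrow⟩ r
      (⟨x, rfl⟩ | ⟨i, rfl⟩ | ⟨j, k, hjk, rfl⟩ | ⟨i, rfl⟩) <;>
      simp [← commutatorElement_def, commutatorElement_eq_one_iff_commute, map_list_prod,
        List.map_ofFn, Function.comp_def, *]
  · intro h
    refine ⟨fun x => ?_, fun i => ?_, fun j k hjk => ?_, fun i => ?_⟩
    · simpa using h _ (Or.inl ⟨x, rfl⟩)
    · simpa [← commutatorElement_def, commutatorElement_eq_one_iff_commute]
        using h _ (Or.inr (Or.inl ⟨i, rfl⟩))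
    · simpa [← commutatorElement_def, commutatorElement_eq_one_iff_commute]
        using h _ (Or.inr (Or.inr (Or.inl ⟨j, k, hjk, rfl⟩)))
    · refine (inv_mul_eq_one.mp ?_).symm
      simpa [map_list_prod, List.map_ofFn, Function.comp_def]
        using h _ (Or.inr (Or.inr (Or.inr ⟨i, rfl⟩)))

end

namespace SolutionGroup

variable {d m n : ℕ} {M : Matrix (Fin m) (Fin n) (ZMod d)} {b : Fin m → ZMod d}
  {G : Type*} [Group G]

theorem satisfiesLCS_of : SatisfiesLCS d M b (PresentedGroup.of : _ → SolutionGroup d M b) :=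
  satisfiesLCS_iff_lift_eq_one.mpr fun _ hr =>
    (FreeGroup.lift_unique (PresentedGroup.mk _) fun _ => rfl).symm.trans
      (PresentedGroup.one_of_mem hr)

def lift {f : Option (Fin n) → G} (hf : SatisfiesLCS d M b f) : SolutionGroup d M b →* G :=
  PresentedGroup.toGroup (satisfiesLCS_iff_lift_eq_one.mp hf)

@[simp]
theorem lift_of {f : Option (Fin n) → G} (hf : SatisfiesLCS d M b f) (x : Option (Fin n)) :
    lift hf (PresentedGroup.of x) = f x :=
  PresentedGroup.toGroup.of _

def reverse : SolutionGroup d M b →* (SolutionGroup d M b)ᵐᵒᵖ := lift satisfiesLCS_of.op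

@[simp]
theorem reverse_of (x : Option (Fin n)) :
    reverse (PresentedGroup.of x : SolutionGroup d M b) = op (PresentedGroup.of x) :=
  lift_of _ x

theorem reverse_prod_ofFn {k : ℕ} (x : Fin k → Option (Fin n)) (e : Fin k → ℕ) :
    reverse (List.ofFn fun t => (PresentedGroup.of (x t) : SolutionGroup d M b) ^ e t).prod =
      op (List.ofFn fun t =>
        (PresentedGroup.of (x t.rev) : SolutionGroup d M b) ^ e t.rev).prod := by
  rw [List.ofFn_comp_rev (fun t => (PresentedGroup.of (x t) : SolutionGroup d M b) ^ e t),
    MulOpposite.op_list_prod, List.map_reverse, List.reverse_reverse, map_list_prod,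
    List.map_ofFn, List.map_ofFn]
  simp only [Function.comp_def, map_pow, reverse_of, op_pow]

theorem sq_pow_eq_one_of_phase_commutation {k c : ℕ} (x : Fin k → Fin n) (e : Fin k → ℕ)
    (h : (List.ofFn fun t => (PresentedGroup.of (some (x t)) : SolutionGroup d M b) ^ e t).prod =
      PresentedGroup.of none ^ c *
        (List.ofFn fun t =>
          (PresentedGroup.of (some (x t.rev)) : SolutionGroup d M b) ^ e t.rev).prod) :
    ((PresentedGroup.of none : SolutionGroup d M b) ^ c) ^ 2 = 1 := by
  refine sq_eq_one_of_eq_mul_of_eq_mul ?_ h ?_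
  · refine Commute.pow_left (Commute.list_prod_right _ _ fun y hy => ?_) c
    obtain ⟨t, rfl⟩ := List.mem_ofFn.mp hy
    exact (satisfiesLCS_of.commute_none (x t)).pow_right _
  · have h_rev := congrArg reverse h
    rw [map_mul, map_pow, reverse_of, reverse_prod_ofFn (fun t => some (x t)),
      reverse_prod_ofFn (fun t => some (x t.rev))] at h_rev
    simp only [Fin.rev_rev] at h_rev
    rwa [← op_pow, ← op_mul, op_inj] at h_rev

end SolutionGroup

section Quantum

variable {d m n : ℕ} [NeZero d] {M : Matrix (Fin m) (Fin n) (ZMod d)} {b : Fin m → ZMod d}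
  {H : Type} [NormedAddCommGroup H] [InnerProductSpace ℂ H] {A : Fin n → H →L[ℂ] H}

noncomputable def IsQuantumSolution.units (hA : IsQuantumSolution d M b A) :
    Option (Fin n) → (H →L[ℂ] H)ˣ
  | none => Units.ofPowEqOne (rootOfUnity d • 1) d
      (by rw [smul_pow, one_pow, (rootOfUnity_isPrimitiveRoot d).pow_eq_one, one_smul])
      (NeZero.ne d)
  | some i => Units.ofPowEqOne (A i) d (hA.1 i) (NeZero.ne d)

theorem IsQuantumSolution.satisfiesLCS_units (hA : IsQuantumSolution d M b A) :
    SatisfiesLCS d M b hA.units where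
  pow_eq_one := by rintro (_ | i) <;> exact Units.pow_ofPowEqOne _ _
  commute_none i :=
    Commute.units_of_val (by simpa [units] using (Commute.one_left (A i)).smul_left _)
  commute_of_row j k hjk := Commute.units_of_val (by simpa [units] using hA.2.1 j k hjk)
  row_prod i := Units.ext <| by
    rw [← Units.coeHom_apply, map_list_prod]
    simpa [units, List.map_ofFn, Function.comp_def, smul_pow] using hA.2.2 i

theorem HasQuantumSolution.eq_zero_of_pow_val_eq_one (hQ : HasQuantumSolution d M b)
    {x : ZMod d} (hx : (PresentedGroup.of none : SolutionGroup d M b) ^ x.val = 1) : x = 0 := by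
  obtain ⟨H, _, _, _, _, A, hA⟩ := hQ
  have hρ := congrArg (fun g => (SolutionGroup.lift hA.satisfiesLCS_units g : H →L[ℂ] H)) hx
  simp only [map_pow, SolutionGroup.lift_of, IsQuantumSolution.units, Units.val_pow_eq_pow_val,
    Units.val_ofPowEqOne, ← Algebra.algebraMap_eq_smul_one] at hρ
  rw [← map_pow] at hρ
  rw [← rootOfUnity_pow_val_eq_one_iff]
  exact (algebraMap ℂ (H →L[ℂ] H)).injective (hρ.trans (map_one _).symm)

end Quantum

/-- for `d` odd, if the solution group of `(M,b)` over `ℤ_d` satisfies a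
generalized phase-commutation relation
`g_{i₁}^{a₁} ⋯ g_{i_k}^{a_k} = J^c g_{i_k}^{a_k} ⋯ g_{i₁}^{a₁}` with `c ≠ 0`, then
`J^{2c} = e` in `𝒢(M,b)` and `(M,b)` has no quantum solution on any nonzero complex
Hilbert space. -/
theorem no_quantum_solution_of_generalized_phase_commutation (d : ℕ) (hd : Odd d)
    {m n : ℕ} (M : Matrix (Fin m) (Fin n) (ZMod d)) (b : Fin m → ZMod d)
    (k : ℕ) (idx : Fin k → Fin n) (a : Fin k → ZMod d) (c : ZMod d) (hc : c ≠ 0)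
    (hrel : (List.ofFn fun t =>
          (PresentedGroup.of (some (idx t)) : SolutionGroup d M b) ^ (a t).val).prod
        = PresentedGroup.of (none : Option (Fin n)) ^ c.val *
          (List.ofFn fun t =>
            (PresentedGroup.of (some (idx t.rev)) : SolutionGroup d M b)
              ^ (a t.rev).val).prod) :
    (PresentedGroup.of (none : Option (Fin n)) : SolutionGroup d M b) ^ (2 * c).val = 1 ∧
      ¬ HasQuantumSolution d M b := by
  have : NeZero d := ⟨hd.pos.ne'⟩
  have hJ : (PresentedGroup.of none : SolutionGroup d M b) ^ (2 * c).val = 1 := by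
    rw [pow_zmodVal_eq_pow (SolutionGroup.satisfiesLCS_of.pow_eq_one none) (n := c.val * 2)
      (by simp [mul_comm]), pow_mul]
    exact SolutionGroup.sq_pow_eq_one_of_phase_commutation idx (fun t => (a t).val) hrel
  refine ⟨hJ, fun hQ => hc ?_⟩
  exact (ZMod.isUnit_two_of_odd hd).mul_right_eq_zero.mp (hQ.eq_zero_of_pow_val_eq_one hJ)
end

section
/- Let d > 2 be prime and let (M,b) be a linear constraint system over ℤ_d of magic-square form: variables x_1,…,x_9 with constraints a_1x_1+a_2x_2+a_3x_3=b_1, a_4x_4+a_5x_5+a_6x_6=b_2, a_7x_7+a_8x_8+a_9x_9=b_3, a_1'x_1+a_4'x_4+a_7'x_7=b_4, a_2'x_2+a_5'x_5+a_8'x_8=b_5, a_3'x_3+a_6'x_6+a_9'x_9=b_6, where all coefficients a_i, a_i' are nonzero elements of ℤ_d. Then (M,b) admits a quantum solution on some nonzero complex Hilbert space if and only if it has a classical solution. -/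
/-- The coefficient matrix of the generalized magic square LCS: rows are the constraints
`a₁x₁+a₂x₂+a₃x₃ = b₁`, `a₄x₄+a₅x₅+a₆x₆ = b₂`, `a₇x₇+a₈x₈+a₉x₉ = b₃`,
`a₁'x₁+a₄'x₄+a₇'x₇ = b₄`, `a₂'x₂+a₅'x₅+a₈'x₈ = b₅`, `a₃'x₃+a₆'x₆+a₉'x₉ = b₆`. -/
def magicSquareMatrix {d : ℕ} (a a' : Fin 9 → ZMod d) : Matrix (Fin 6) (Fin 9) (ZMod d) :=
  Matrix.of
    ![![a 0, a 1, a 2, 0, 0, 0, 0, 0, 0],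
      ![0, 0, 0, a 3, a 4, a 5, 0, 0, 0],
      ![0, 0, 0, 0, 0, 0, a 6, a 7, a 8],
      ![a' 0, 0, 0, a' 3, 0, 0, a' 6, 0, 0],
      ![0, a' 1, 0, 0, a' 4, 0, 0, a' 7, 0],
      ![0, 0, a' 2, 0, 0, a' 5, 0, 0, a' 8]]

/-!
For a quantum solution `A` and any `l` in the left kernel of the coefficient matrix, scale the
operator in cell `(i, j)` to `A ^ (a l_i) = A ^ (-a' l_{3+j})` (the two exponents agree because
`lᵀ M = 0`). The scaled operators form a magic square whose row and column products are the
central phases `ω ^ (l_i b_i)` and `ω ^ (-l_{3+j} b_{3+j})`, so the Mermin–Peres commutation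
argument shows that the product of all row phases and that of all column phases have the same
square, i.e. `2 (l ⬝ b) = 0`. As `d` is odd, `l ⬝ b = 0`, and by the Fredholm alternative over
the field `ℤ_d` the system has a classical solution. Conversely a classical solution `x` gives the
one-dimensional quantum solution `A_j = ω ^ x_j`.
-/

open Matrix in
theorem Matrix.exists_mulVec_eq_of_forall_vecMul_eq_zero {K m n : Type*} [Field K] [Fintype m]
    [DecidableEq m] [Fintype n] [DecidableEq n] (M : Matrix m n K) (b : m → K)
    (h : ∀ l, l ᵥ* M = 0 → l ⬝ᵥ b = 0) : ∃ x, M *ᵥ x = b := by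
  show b ∈ LinearMap.range M.mulVecLin
  rw [← Subspace.forall_mem_dualAnnihilator_apply_eq_zero_iff]
  intro φ hφ
  obtain ⟨l, rfl⟩ := (dotProductEquiv K m).surjective φ
  refine h l (funext fun j => ?_)
  have := (Submodule.mem_dualAnnihilator _).1 hφ _ (LinearMap.mem_range_self _ (Pi.single j 1))
  rwa [dotProductEquiv_apply_apply, mulVecLin_apply, dotProduct_mulVec, dotProduct_single_one]
    at this

theorem pow_val_pow_val {M : Type*} [Monoid M] {d : ℕ} [NeZero d] {x : M} (hx : x ^ d = 1)
    (u t : ZMod d) : (x ^ u.val) ^ t.val = x ^ (u * t).val := by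
  rw [← pow_mul]
  exact pow_eq_pow_of_modEq ((ZMod.natCast_eq_natCast_iff _ _ _).1 (by simp)) hx

theorem Commute.triple_pow_val_mul_eq_pow_val {M : Type*} [Monoid M] {d : ℕ} [NeZero d]
    {x y z w : M} (hx : x ^ d = 1) (hy : y ^ d = 1) (hz : z ^ d = 1) (hxy : Commute x y)
    (hxz : Commute x z) (hyz : Commute y z) {α β γ : ZMod d}
    (h : x ^ α.val * y ^ β.val * z ^ γ.val = w)
    (t : ZMod d) : x ^ (α * t).val * y ^ (β * t).val * z ^ (γ * t).val = w ^ t.val := by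
  rw [← pow_val_pow_val hx, ← pow_val_pow_val hy, ← pow_val_pow_val hz, ← h,
    ((hxz.pow_pow _ _).mul_left (hyz.pow_pow _ _)).mul_pow, (hxy.pow_pow _ _).mul_pow]

theorem magicSquare_obstruction_sq_eq_one {G : Type*} [Group G] {A B C E z : G}
    (hz : z ∈ Subgroup.center G) (hAB : Commute A B) (hAC : Commute A C) (hBE : Commute B E)
    (hCE : Commute C E) (hBEAC : Commute (B * E) (A * C)) (hCEAB : Commute (C * E) (A * B))
    (h : B * E * (A * C) = C * E * (A * B) * z) : z ^ 2 = 1 := by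
  have hzc : ∀ x, x * z = z * x := Subgroup.mem_center_iff.1 hz
  have hBC : B * C = C * B * z := by
    have hB : Commute B (E * A) := hBE.mul_right hAB.symm
    have hC : Commute C (E * A) := hCE.mul_right hAC.symm
    refine mul_right_cancel (b := E * A) ?_
    calc B * C * (E * A) = B * (E * A) * C := by rw [mul_assoc, hC.eq, ← mul_assoc]
      _ = B * E * (A * C) := by simp only [mul_assoc]
      _ = C * E * (A * B) * z := h
      _ = C * (E * A) * B * z := by simp only [mul_assoc]
      _ = C * B * (E * A) * z := by rw [mul_assoc C, ← hB.eq, ← mul_assoc]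
      _ = C * B * z * (E * A) := by rw [mul_assoc (C * B), hzc, ← mul_assoc]
  have hCB : C * B = B * C * z := by
    refine mul_left_cancel (a := A) (mul_right_cancel (b := E) ?_)
    calc A * (C * B) * E = A * C * (B * E) := by simp only [mul_assoc]
      _ = B * E * (A * C) := hBEAC.eq.symm
      _ = A * B * (C * E) * z := by rw [h, hCEAB.eq]
      _ = A * (B * C * z) * E := by simp only [mul_assoc, hzc E]
  refine mul_left_cancel (a := B * C) ?_
  calc B * C * z ^ 2 = B * C * z * z := by rw [sq, ← mul_assoc]
    _ = B * C * 1 := by rw [← hCB, ← hBC, mul_one]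

open scoped IsMulCommutative in
theorem magicSquare_rowProd_sq_eq_colProd_sq {G : Type*} [Group G] (g : Fin 3 → Fin 3 → G)
    {r c : Fin 3 → G} (hr : ∀ i, r i ∈ Subgroup.center G)
    (hc : ∀ j, c j ∈ Subgroup.center G) (hrow_comm : ∀ i j k, Commute (g i j) (g i k))
    (hcol_comm : ∀ j i k, Commute (g i j) (g k j))
    (hrow : ∀ i, g i 0 * g i 1 * g i 2 = r i) (hcol : ∀ j, g 0 j * g 1 j * g 2 j = c j) :
    (r 0 * r 1 * r 2) ^ 2 = (c 0 * c 1 * c 2) ^ 2 := by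
  have central {x y : G} (hx : x ∈ Subgroup.center G) : Commute x y :=
    (Subgroup.mem_center_iff.1 hx y).symm
  have hrow' : ∀ i, g i 0 * g i 1 = r i * (g i 2)⁻¹ := fun i => eq_mul_inv_of_mul_eq (hrow i)
  have hcol' : ∀ j, g 0 j * g 1 j = c j * (g 2 j)⁻¹ := fun j => eq_mul_inv_of_mul_eq (hcol j)
  -- `A, B, C, E` of `magicSquare_obstruction_sq_eq_one` are `g 0 0, g 0 1, g 1 0, g 1 1`
  have hBEAC : Commute (g 0 1 * g 1 1) (g 0 0 * g 1 0) := by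
    rw [hcol', hcol']
    exact (central (hc 1)).mul_left ((central (hc 0)).symm.mul_right (hrow_comm 2 1 0).inv_inv)
  have hCEAB : Commute (g 1 0 * g 1 1) (g 0 0 * g 0 1) := by
    rw [hrow', hrow']
    exact (central (hr 1)).mul_left ((central (hr 0)).symm.mul_right (hcol_comm 2 1 0).inv_inv)
  -- `g 0 1 * g 1 1 * (g 0 0 * g 1 0)` and `g 1 0 * g 1 1 * (g 0 0 * g 0 1)` both equal the corner
  -- `g 2 2` up to central factors
  have corner {p q u v w s : G} (hp : p ∈ Subgroup.center G) (hq : q ∈ Subgroup.center G)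
      (h : u * v * w = s) : p * v⁻¹ * (q * u⁻¹) = w * (p * q * s⁻¹) :=
    calc p * v⁻¹ * (q * u⁻¹) = p * q * (u * v)⁻¹ := by
          rw [mul_assoc p, (central hq).symm.left_comm, ← mul_assoc, mul_inv_rev]
      _ = p * q * (w * s⁻¹) := by rw [eq_mul_inv_of_mul_eq h, mul_inv_rev, inv_inv]
      _ = w * (p * q * s⁻¹) := ((central hp).mul_left (central hq)).left_comm _
  lift r to Fin 3 → Subgroup.center G using hr
  lift c to Fin 3 → Subgroup.center G using hc
  set z := c 0 * c 1 * c 2 * (r 0 * r 1 * r 2)⁻¹ with hz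
  have hz_sq : (z : G) ^ 2 = 1 := by
    refine magicSquare_obstruction_sq_eq_one z.2 (hrow_comm 0 0 1) (hcol_comm 0 0 1)
      (hcol_comm 1 0 1) (hrow_comm 1 0 1) hBEAC hCEAB ?_
    have hz' : z = (r 1 * r 0 * (c 2)⁻¹)⁻¹ * (c 1 * c 0 * (r 2)⁻¹) := by
      simp only [hz, mul_inv_rev, inv_inv]; ac_rfl
    rw [hcol', hcol', hrow', hrow', corner (c 1).2 (c 0).2 (hrow 2),
      corner (r 1).2 (r 0).2 (hcol 2), hz']
    push_cast
    group
  have hz_sq' : z ^ 2 = 1 := Subtype.ext (by exact_mod_cast hz_sq)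
  rw [hz, mul_pow, inv_pow, mul_inv_eq_one] at hz_sq'
  exact congrArg Subtype.val hz_sq'.symm

theorem AddChar.prod_ofFn {A M : Type*} [AddMonoid A] [Monoid M] (ψ : AddChar A M) {n : ℕ}
    (f : Fin n → A) : (List.ofFn fun j => ψ (f j)).prod = ψ (List.ofFn f).sum := by
  induction n with
  | zero => simp
  | succ n ih => simp [List.ofFn_succ, ih, AddChar.map_add_eq_mul]

theorem rootOfUnity_pow_val {d : ℕ} [NeZero d] (k : ZMod d) :
    rootOfUnity d ^ k.val = ZMod.stdAddChar k := by
  rw [ZMod.stdAddChar_apply, ZMod.toCircle_apply, rootOfUnity, ← Complex.exp_nat_mul]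
  ring_nf

/-- The scalar `ω ^ k` as a unit of a complex algebra. -/
noncomputable def phase (d : ℕ) [NeZero d] (R : Type*) [Ring R] [Algebra ℂ R] :
    AddChar (ZMod d) Rˣ :=
  (Units.map (algebraMap ℂ R : ℂ →* R)).compAddChar (Circle.toUnits.compAddChar ZMod.toCircle)

section Phase

variable {d : ℕ} [NeZero d] {R : Type*} [Ring R] [Algebra ℂ R]

theorem val_phase (k : ZMod d) : (phase d R k : R) = algebraMap ℂ R (ZMod.stdAddChar k) := rfl

theorem phase_mem_center (k : ZMod d) : phase d R k ∈ Subgroup.center Rˣ :=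
  Subgroup.mem_center_iff.2 fun _ => Units.ext (Algebra.commutes _ _).symm

theorem phase_injective [Nontrivial R] : Function.Injective (phase d R) := by
  intro k k' h
  apply ZMod.injective_stdAddChar
  exact (algebraMap ℂ R).injective (by simpa only [val_phase] using congrArg Units.val h)

theorem phase_pow_val (u t : ZMod d) : phase d R u ^ t.val = phase d R (u * t) := by
  rw [← AddChar.map_nsmul_eq_pow, nsmul_eq_mul, ZMod.natCast_val, ZMod.cast_id', id, mul_comm]

theorem rootOfUnity_pow_val_smul_one (k : ZMod d) :
    rootOfUnity d ^ k.val • (1 : R) = phase d R k := by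
  rw [val_phase, rootOfUnity_pow_val, Algebra.algebraMap_eq_smul_one]

end Phase

open Matrix in
theorem isQuantumSolution_phase_of_mulVec_eq {d m n : ℕ} [NeZero d]
    {M : Matrix (Fin m) (Fin n) (ZMod d)} {b : Fin m → ZMod d} {x : Fin n → ZMod d}
    (hx : M *ᵥ x = b) (H : Type) [NormedAddCommGroup H] [InnerProductSpace ℂ H] :
    IsQuantumSolution d M b fun j => (phase d (H →L[ℂ] H) (x j) : H →L[ℂ] H) := by
  refine ⟨fun j => ?_, fun j k _ => ?_, fun i => ?_⟩
  · rw [← Units.val_pow_eq_pow_val, ← AddChar.map_nsmul_eq_pow, nsmul_eq_mul,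
      ZMod.natCast_self, zero_mul, AddChar.map_zero_eq_one, Units.val_one]
  · exact Commute.units_val (Subgroup.mem_center_iff.1 (phase_mem_center (x k)) _)
  · let ψ := (Units.coeHom (H →L[ℂ] H)).compAddChar (phase d (H →L[ℂ] H))
    calc (List.ofFn fun j => (phase d (H →L[ℂ] H) (x j) : H →L[ℂ] H) ^ (M i j).val).prod
        = (List.ofFn fun j => ψ (x j * M i j)).prod := by
          simp only [← Units.val_pow_eq_pow_val, phase_pow_val]; rfl
      _ = ψ (b i) := by
          rw [AddChar.prod_ofFn, List.sum_ofFn, ← hx]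
          simp only [mulVec, dotProduct, mul_comm]
      _ = rootOfUnity d ^ (b i).val • 1 := by rw [rootOfUnity_pow_val_smul_one]; rfl

namespace MagicSquare

open Matrix

def cell : Fin 3 → Fin 3 → Fin 9 := ![![0, 1, 2], ![3, 4, 5], ![6, 7, 8]]

def rowIdx : Fin 3 → Fin 6 := ![0, 1, 2]

def colIdx : Fin 3 → Fin 6 := ![3, 4, 5]

section Matrix

variable {d : ℕ} (a a' : Fin 9 → ZMod d)

theorem magicSquareMatrix_rowIdx_cell (i j : Fin 3) :
    magicSquareMatrix a a' (rowIdx i) (cell i j) = a (cell i j) := by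
  fin_cases i <;> fin_cases j <;> rfl

theorem magicSquareMatrix_colIdx_cell (i j : Fin 3) :
    magicSquareMatrix a a' (colIdx j) (cell i j) = a' (cell i j) := by
  fin_cases i <;> fin_cases j <;> rfl

theorem vecMul_magicSquareMatrix_cell (l : Fin 6 → ZMod d) (i j : Fin 3) :
    (l ᵥ* magicSquareMatrix a a') (cell i j) =
      l (rowIdx i) * a (cell i j) + l (colIdx j) * a' (cell i j) := by
  fin_cases i <;> fin_cases j <;>
    simp [vecMul, dotProduct, Fin.sum_univ_succ, magicSquareMatrix, cell, rowIdx, colIdx]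

theorem prod_ofFn_pow_rowIdx {N : Type*} [Monoid N] (A : Fin 9 → N) (i : Fin 3) :
    (List.ofFn fun v => A v ^ (magicSquareMatrix a a' (rowIdx i) v).val).prod =
      A (cell i 0) ^ (a (cell i 0)).val * A (cell i 1) ^ (a (cell i 1)).val *
        A (cell i 2) ^ (a (cell i 2)).val := by
  fin_cases i <;> simp [List.ofFn_succ, magicSquareMatrix, cell, rowIdx, mul_assoc]

theorem prod_ofFn_pow_colIdx {N : Type*} [Monoid N] (A : Fin 9 → N) (j : Fin 3) :
    (List.ofFn fun v => A v ^ (magicSquareMatrix a a' (colIdx j) v).val).prod =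
      A (cell 0 j) ^ (a' (cell 0 j)).val * A (cell 1 j) ^ (a' (cell 1 j)).val *
        A (cell 2 j) ^ (a' (cell 2 j)).val := by
  fin_cases j <;> simp [List.ofFn_succ, magicSquareMatrix, cell, colIdx, mul_assoc]

end Matrix

section QuantumSolution

variable {d : ℕ} {a a' : Fin 9 → ZMod d} {b : Fin 6 → ZMod d} {H : Type}
  [NormedAddCommGroup H] [InnerProductSpace ℂ H] {A : Fin 9 → H →L[ℂ] H}

theorem prod_row_eq_phase [NeZero d] (hA : IsQuantumSolution d (magicSquareMatrix a a') b A)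
    (i : Fin 3) :
    A (cell i 0) ^ (a (cell i 0)).val * A (cell i 1) ^ (a (cell i 1)).val *
      A (cell i 2) ^ (a (cell i 2)).val = phase d (H →L[ℂ] H) (b (rowIdx i)) := by
  rw [← prod_ofFn_pow_rowIdx a a', hA.2.2, rootOfUnity_pow_val_smul_one]

theorem prod_col_eq_phase [NeZero d] (hA : IsQuantumSolution d (magicSquareMatrix a a') b A)
    (j : Fin 3) :
    A (cell 0 j) ^ (a' (cell 0 j)).val * A (cell 1 j) ^ (a' (cell 1 j)).val *
      A (cell 2 j) ^ (a' (cell 2 j)).val = phase d (H →L[ℂ] H) (b (colIdx j)) := by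
  rw [← prod_ofFn_pow_colIdx a a', hA.2.2, rootOfUnity_pow_val_smul_one]

theorem commute_of_same_row (ha : ∀ v, a v ≠ 0)
    (hA : IsQuantumSolution d (magicSquareMatrix a a') b A) (i j k : Fin 3) :
    Commute (A (cell i j)) (A (cell i k)) :=
  hA.2.1 _ _ ⟨rowIdx i, by simpa only [magicSquareMatrix_rowIdx_cell] using ⟨ha _, ha _⟩⟩

theorem commute_of_same_col (ha' : ∀ v, a' v ≠ 0)
    (hA : IsQuantumSolution d (magicSquareMatrix a a') b A) (j i k : Fin 3) :
    Commute (A (cell i j)) (A (cell k j)) :=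
  hA.2.1 _ _ ⟨colIdx j, by simpa only [magicSquareMatrix_colIdx_cell] using ⟨ha' _, ha' _⟩⟩

theorem two_mul_dotProduct_eq_zero [NeZero d] [Nontrivial H] (ha : ∀ v, a v ≠ 0)
    (ha' : ∀ v, a' v ≠ 0) (hA : IsQuantumSolution d (magicSquareMatrix a a') b A)
    {l : Fin 6 → ZMod d} (hl : l ᵥ* magicSquareMatrix a a' = 0) : 2 * (l ⬝ᵥ b) = 0 := by
  have hcomm_row := commute_of_same_row ha hA
  have hcomm_col := commute_of_same_col ha' hA
  have hscale (i j : Fin 3) : a (cell i j) * l (rowIdx i) = a' (cell i j) * -l (colIdx j) := by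
    have := congrFun hl (cell i j)
    rw [vecMul_magicSquareMatrix_cell, Pi.zero_apply] at this
    linear_combination this
  let u (v : Fin 9) : (H →L[ℂ] H)ˣ := (IsUnit.of_pow_eq_one (hA.1 v) (NeZero.ne d)).unit
  have hu (v : Fin 9) (n : ℕ) : ((u v ^ n : (H →L[ℂ] H)ˣ) : H →L[ℂ] H) = A v ^ n := by
    rw [Units.val_pow_eq_pow_val, IsUnit.unit_spec]
  let g (i j : Fin 3) := u (cell i j) ^ (a (cell i j) * l (rowIdx i)).val
  have hg_row (i : Fin 3) :
      g i 0 * g i 1 * g i 2 = phase d (H →L[ℂ] H) (b (rowIdx i) * l (rowIdx i)) :=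
    Units.ext (by
      simpa only [g, Units.val_mul, hu, ← phase_pow_val, Units.val_pow_eq_pow_val] using
        (hcomm_row i 0 1).triple_pow_val_mul_eq_pow_val (hA.1 _) (hA.1 _) (hA.1 _)
          (hcomm_row i 0 2) (hcomm_row i 1 2) (prod_row_eq_phase hA i) (l (rowIdx i)))
  have hg_col (j : Fin 3) :
      g 0 j * g 1 j * g 2 j = phase d (H →L[ℂ] H) (b (colIdx j) * -l (colIdx j)) :=
    Units.ext (by
      simpa only [g, Units.val_mul, hu, hscale, ← phase_pow_val, Units.val_pow_eq_pow_val] using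
        (hcomm_col j 0 1).triple_pow_val_mul_eq_pow_val (hA.1 _) (hA.1 _) (hA.1 _)
          (hcomm_col j 0 2) (hcomm_col j 1 2) (prod_col_eq_phase hA j) (-l (colIdx j)))
  have key := magicSquare_rowProd_sq_eq_colProd_sq g
    (fun _ => phase_mem_center _) (fun _ => phase_mem_center _)
    (fun i j k => Commute.units_of_val (by simpa only [g, hu] using (hcomm_row i j k).pow_pow _ _))
    (fun j i k => Commute.units_of_val (by
      simpa only [g, hu, hscale] using (hcomm_col j i k).pow_pow _ _))
    hg_row hg_col
  simp only [← AddChar.map_add_eq_mul, ← AddChar.map_nsmul_eq_pow] at key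
  have := phase_injective key
  simp only [rowIdx, colIdx, cons_val_zero, cons_val_one, cons_val, nsmul_eq_mul, Nat.cast_ofNat]
    at this
  simp only [dotProduct, Fin.sum_univ_six]
  linear_combination this

end QuantumSolution

end MagicSquare

/-- for `d > 2` prime, a magic-square-form LCS over `ℤ_d` with all
coefficients nonzero admits a quantum solution on some nonzero complex Hilbert space iff
it has a classical solution. -/
theorem magicSquare_quantum_iff_classical (d : ℕ) (hd : d.Prime) (hd2 : 2 < d)
    (a a' : Fin 9 → ZMod d) (ha : ∀ i, a i ≠ 0) (ha' : ∀ i, a' i ≠ 0)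
    (b : Fin 6 → ZMod d) :
    HasQuantumSolution d (magicSquareMatrix a a') b ↔
      ∃ x : Fin 9 → ZMod d, (magicSquareMatrix a a').mulVec x = b := by
  have : Fact d.Prime := ⟨hd⟩
  constructor
  · rintro ⟨H, _, _, _, _, A, hA⟩
    refine (magicSquareMatrix a a').exists_mulVec_eq_of_forall_vecMul_eq_zero b fun l hl => ?_
    have h2 : (2 : ZMod d) ≠ 0 := Ring.two_ne_zero (by rw [ZMod.ringChar_zmod_n]; omega)
    exact (mul_eq_zero.1 (MagicSquare.two_mul_dotProduct_eq_zero ha ha' hA hl)).resolve_left h2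
  · rintro ⟨x, hx⟩
    exact ⟨ℂ, _, _, inferInstance, inferInstance, _,
      isQuantumSolution_phase_of_mulVec_eq hx ℂ⟩
end

section
/- Let d > 1 be odd and let (M,b) be a linear constraint system over ℤ_d of magic-square form: variables x_1,…,x_9 with constraints a_1x_1+a_2x_2+a_3x_3=b_1, a_4x_4+a_5x_5+a_6x_6=b_2, a_7x_7+a_8x_8+a_9x_9=b_3, a_1'x_1+a_4'x_4+a_7'x_7=b_4, a_2'x_2+a_5'x_5+a_8'x_8=b_5, a_3'x_3+a_6'x_6+a_9'x_9=b_6, where every coefficient a_i, a_i' lies in {1, −1} ⊂ ℤ_d. Then (M,b) admits a quantum solution on some nonzero complex Hilbert space if and only if it has a classical solution. -/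
set_option linter.unusedSectionVars false
set_option linter.unusedVariables false
set_option maxHeartbeats 1000000

lemma rootOfUnity_primitive (d : ℕ) (hd : d ≠ 0) : IsPrimitiveRoot (rootOfUnity d) d := by
  have := Complex.isPrimitiveRoot_exp d hd
  unfold rootOfUnity
  convert this using 2

section chi
variable {d : ℕ} [NeZero d]

lemma rpow_d : rootOfUnity d ^ d = 1 :=
  ((rootOfUnity_primitive d (NeZero.ne d)).pow_eq_one_iff_dvd d).2 dvd_rfl

lemma rpow_mod (m : ℕ) : rootOfUnity d ^ m = rootOfUnity d ^ (m % d) := by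
  conv_lhs => rw [← Nat.div_add_mod m d]
  rw [pow_add, pow_mul, rpow_d, one_pow, one_mul]

noncomputable def chi (d : ℕ) (v : ZMod d) : ℂ := rootOfUnity d ^ v.val

lemma chi_ne_zero (v : ZMod d) : chi d v ≠ 0 := pow_ne_zero _ (Complex.exp_ne_zero _)

lemma chi_zero : chi d 0 = 1 := by simp [chi, ZMod.val_zero]

lemma chi_add (v w : ZMod d) : chi d (v + w) = chi d v * chi d w := by
  rw [chi, chi, chi, ← pow_add, ZMod.val_add, ← rpow_mod]

lemma chi_pow_d (v : ZMod d) : chi d v ^ d = 1 := by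
  rw [chi, ← pow_mul, mul_comm, pow_mul, rpow_d, one_pow]

lemma chi_inj {v w : ZMod d} (h : chi d v = chi d w) : v = w :=
  ZMod.val_injective d <|
    (rootOfUnity_primitive d (NeZero.ne d)).pow_inj (ZMod.val_lt v) (ZMod.val_lt w) h

lemma chi_natpow (v w : ZMod d) : chi d v ^ w.val = chi d (w * v) := by
  rw [chi, chi, ← pow_mul, ZMod.val_mul, ← rpow_mod, mul_comm w.val v.val]

lemma chi_neg (v : ZMod d) : chi d (-v) = (chi d v)⁻¹ := by
  have h : chi d (-v) * chi d v = 1 := by rw [← chi_add, neg_add_cancel, chi_zero]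
  exact eq_inv_of_mul_eq_one_left h

end chi


private lemma cswap {G : Type*} [Group G] {x y : G} (h : x * y = y * x) (c : G) :
    x * (y * c) = y * (x * c) := by rw [← mul_assoc, h, mul_assoc]

lemma core_four {G : Type*} [Group G] (p q r s γ : G)
    (hγ : ∀ g, γ * g = g * γ)
    (hpq : p * q = q * p) (hpr : p * r = r * p) (hqs : q * s = s * q) (hrs : r * s = s * r)
    (h1 : (p*q) * (r*s) = (r*s) * (p*q)) (h2 : (p*r) * (q*s) = (q*s) * (p*r))
    (h3 : γ * (q*(s*(p*r))) = r*(s*(p*q))) : γ * γ = 1 := by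
  have hγi : ∀ g : G, γ⁻¹ * g = g * γ⁻¹ := by
    intro g
    exact (Commute.inv_left (hγ g)).eq
  have hqr : γ * (q*r) = r * q := by
    have e1 : γ * (q*(s*(p*r))) = s*(p*(γ*(q*r))) := by
      rw [cswap hqs, cswap hpq.symm, cswap (hγ s), cswap (hγ p)]
    have e2 : r*(s*(p*q)) = s*(p*(r*q)) := by
      rw [cswap hrs, cswap hpr.symm]
    rw [e1, e2] at h3
    exact mul_left_cancel (mul_left_cancel h3)
  have hqr' : q * r = γ⁻¹ * (r * q) := by
    rw [← hqr, ← mul_assoc, inv_mul_cancel, one_mul]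
  have hps : γ⁻¹ * (p * s) = s * p := by
    have e1 : (p*q) * (r*s) = r*(γ⁻¹*(p*(s*q))) := by
      calc (p*q) * (r*s) = p*(q*(r*s)) := by rw [mul_assoc]
        _ = p*((q*r)*s) := by rw [mul_assoc]
        _ = p*((γ⁻¹*(r*q))*s) := by rw [← hqr']
        _ = p*(γ⁻¹*(r*(q*s))) := by rw [mul_assoc, mul_assoc]
        _ = p*(γ⁻¹*(r*(s*q))) := by rw [hqs]
        _ = γ⁻¹*(p*(r*(s*q))) := by rw [cswap (hγi p).symm]
        _ = γ⁻¹*(r*(p*(s*q))) := by rw [cswap hpr.symm]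
        _ = r*(γ⁻¹*(p*(s*q))) := by rw [cswap (hγi r)]
    have e2 : (r*s) * (p*q) = r*(s*(p*q)) := by rw [mul_assoc]
    rw [e1, e2] at h1
    have h1' := mul_left_cancel h1
    have h1'' : (γ⁻¹*(p*s))*q = (s*p)*q := by
      simp only [mul_assoc]; exact h1'
    exact mul_right_cancel h1''
  have hfinal : γ * (q*(p*(s*r))) = γ⁻¹ * (q*(p*(s*r))) := by
    have e1 : (p*r) * (q*s) = γ*(q*(p*(s*r))) := by
      calc (p*r) * (q*s) = p*(r*(q*s)) := by rw [mul_assoc]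
        _ = p*((r*q)*s) := by rw [mul_assoc]
        _ = p*((γ*(q*r))*s) := by rw [hqr]
        _ = p*(γ*(q*(r*s))) := by rw [mul_assoc, mul_assoc]
        _ = p*(γ*(q*(s*r))) := by rw [hrs]
        _ = γ*(p*(q*(s*r))) := by rw [cswap (hγ p).symm]
        _ = γ*(q*(p*(s*r))) := by rw [cswap hpq]
    have e2 : (q*s) * (p*r) = γ⁻¹*(q*(p*(s*r))) := by
      calc (q*s) * (p*r) = q*(s*(p*r)) := by rw [mul_assoc]
        _ = q*((s*p)*r) := by rw [mul_assoc]
        _ = q*((γ⁻¹*(p*s))*r) := by rw [hps]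
        _ = q*(γ⁻¹*(p*(s*r))) := by rw [mul_assoc, mul_assoc]
        _ = γ⁻¹*(q*(p*(s*r))) := by rw [cswap (hγi q).symm]
    rw [e1, e2] at h2
    exact h2
  have : γ = γ⁻¹ := mul_right_cancel hfinal
  nth_rewrite 2 [this]; exact mul_inv_cancel γ


private lemma central_collect {G C : Type*} [Group G] [CommGroup C] (ι : C →* G)
    (hι : ∀ (c : C) (g : G), ι c * g = g * ι c) (u v : G) (c1 c2 c3 : C) :
    (u⁻¹ * ι c1)⁻¹ * ((v⁻¹ * ι c2)⁻¹ * ι c3) = ι (c1⁻¹ * c2⁻¹ * c3) * (u * v) := by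
  rw [mul_inv_rev, mul_inv_rev, inv_inv, inv_inv, ← map_inv, ← map_inv]
  simp only [mul_assoc, map_mul]
  rw [← hι c3 v, cswap ((hι (c2⁻¹) u).symm), cswap ((hι c3 u).symm)]

lemma magic_core {G C : Type*} [Group G] [CommGroup C] (ι : C →* G)
    (hι : ∀ (c : C) (g : G), ι c * g = g * ι c)
    (p q x2 r s x5 x6 x7 x8 : G) (α0 α1 α2 β0 β1 β2 : C)
    (hpq : p*q = q*p) (hpr : p*r = r*p) (hqs : q*s = s*q) (hrs : r*s = s*r)
    (c25 : x2*x5 = x5*x2) (c67 : x6*x7 = x7*x6)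
    (R0 : p*(q*x2) = ι α0) (R1 : r*(s*x5) = ι α1) (R2 : x6*(x7*x8) = ι α2)
    (Cc0 : p*(r*x6) = ι β0) (Cc1 : q*(s*x7) = ι β1) (Cc2 : x2*(x5*x8) = ι β2) :
    ι ((α0*α1*α2*(β0*β1*β2)⁻¹) * (α0*α1*α2*(β0*β1*β2)⁻¹)) = 1 := by
  have hx2 : x2 = (p*q)⁻¹ * ι α0 := by rw [← R0]; group
  have hx5 : x5 = (r*s)⁻¹ * ι α1 := by rw [← R1]; group
  have hx6 : x6 = (p*r)⁻¹ * ι β0 := by rw [← Cc0]; group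
  have hx7 : x7 = (q*s)⁻¹ * ι β1 := by rw [← Cc1]; group
  have hx8R : x8 = x7⁻¹ * (x6⁻¹ * ι α2) := by rw [← R2]; group
  have hx8C : x8 = x5⁻¹ * (x2⁻¹ * ι β2) := by rw [← Cc2]; group
  have h1 : (p*q)*(r*s) = (r*s)*(p*q) := by
    rw [hx2, hx5] at c25
    have e : (p*q)⁻¹ * ((r*s)⁻¹ * ι (α0*α1)) = (r*s)⁻¹ * ((p*q)⁻¹ * ι (α0*α1)) := by
      calc (p*q)⁻¹ * ((r*s)⁻¹ * ι (α0*α1))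
          = (p*q)⁻¹ * ι α0 * ((r*s)⁻¹ * ι α1) := by
            rw [map_mul]
            simp only [mul_assoc]
            rw [cswap (hι α0 ((r*s)⁻¹))]
        _ = (r*s)⁻¹ * ι α1 * ((p*q)⁻¹ * ι α0) := c25
        _ = (r*s)⁻¹ * ((p*q)⁻¹ * ι (α0*α1)) := by
            simp only [mul_assoc]
            rw [cswap (hι α1 ((p*q)⁻¹)), ← map_mul, mul_comm α1 α0]
    have e2 : (p*q)⁻¹ * (r*s)⁻¹ = (r*s)⁻¹ * (p*q)⁻¹ := by
      rw [← mul_assoc, ← mul_assoc] at e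
      exact mul_right_cancel e
    have := congrArg (fun z => z⁻¹) e2
    simpa [mul_inv_rev] using this.symm
  have h2 : (p*r)*(q*s) = (q*s)*(p*r) := by
    rw [hx6, hx7] at c67
    have e : (p*r)⁻¹ * ((q*s)⁻¹ * ι (β0*β1)) = (q*s)⁻¹ * ((p*r)⁻¹ * ι (β0*β1)) := by
      calc (p*r)⁻¹ * ((q*s)⁻¹ * ι (β0*β1))
          = (p*r)⁻¹ * ι β0 * ((q*s)⁻¹ * ι β1) := by
            rw [map_mul]
            simp only [mul_assoc]
            rw [cswap (hι β0 ((q*s)⁻¹))]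
        _ = (q*s)⁻¹ * ι β1 * ((p*r)⁻¹ * ι β0) := c67
        _ = (q*s)⁻¹ * ((p*r)⁻¹ * ι (β0*β1)) := by
            simp only [mul_assoc]
            rw [cswap (hι β1 ((p*r)⁻¹)), ← map_mul, mul_comm β1 β0]
    have e2 : (p*r)⁻¹ * (q*s)⁻¹ = (q*s)⁻¹ * (p*r)⁻¹ := by
      rw [← mul_assoc, ← mul_assoc] at e
      exact mul_right_cancel e
    have := congrArg (fun z => z⁻¹) e2
    simpa [mul_inv_rev] using this.symm
  have e := hx8R.symm.trans hx8C
  rw [hx2, hx5, hx6, hx7, central_collect ι hι, central_collect ι hι] at e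
  have h3' : ι (α0*α1*α2*(β0*β1*β2)⁻¹) * (q*(s*(p*r))) = r*(s*(p*q)) := by
    have e3 := congrArg (fun z => ι ((α1⁻¹ * α0⁻¹ * β2)⁻¹) * z) e
    have eR : ι ((α1⁻¹*α0⁻¹*β2)⁻¹) * (ι (α1⁻¹*α0⁻¹*β2) * (r*s*(p*q))) = r*s*(p*q) := by
      rw [← mul_assoc, ← map_mul, inv_mul_cancel, map_one, one_mul]
    rw [eR, ← mul_assoc, ← map_mul] at e3
    have hsc : (α1⁻¹ * α0⁻¹ * β2)⁻¹ * (β1⁻¹ * β0⁻¹ * α2) = α0*α1*α2*(β0*β1*β2)⁻¹ := by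
      simp [mul_inv_rev, inv_inv, mul_comm, mul_left_comm, mul_assoc]
    rw [hsc] at e3
    simpa [mul_assoc] using e3
  have := core_four p q r s (ι (α0*α1*α2*(β0*β1*β2)⁻¹))
    (fun g => hι _ g) hpq hpr hqs hrs h1 h2 h3'
  rw [map_mul]
  exact this

/-- An element with `x ^ d = 1`, `0 < d`, as a unit. -/
def powUnit {M : Type*} [Monoid M] (d : ℕ) (hd : 0 < d) (x : M) (h : x ^ d = 1) : Mˣ where
  val := x
  inv := x ^ (d - 1)
  val_inv := by rw [← pow_succ', Nat.sub_add_cancel hd, h]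
  inv_val := by rw [← pow_succ, Nat.sub_add_cancel hd, h]

@[simp] lemma powUnit_val {M : Type*} [Monoid M] (d : ℕ) (hd : 0 < d) (x : M) (h : x ^ d = 1) :
    (powUnit d hd x h : M) = x := rfl

section grouppow
variable {G : Type*} [Group G] {d : ℕ} [NeZero d] {u : G}

lemma gpow_mod (hu : u ^ d = 1) (m : ℕ) : u ^ m = u ^ (m % d) := by
  conv_lhs => rw [← Nat.div_add_mod m d]
  rw [pow_add, pow_mul, hu, one_pow, one_mul]

lemma gpow_val_add (hu : u ^ d = 1) (v w : ZMod d) : u ^ (v + w).val = u ^ v.val * u ^ w.val := by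
  rw [← pow_add, ZMod.val_add, ← gpow_mod hu]

lemma gpow_val_neg (hu : u ^ d = 1) (v : ZMod d) : u ^ (-v).val = (u ^ v.val)⁻¹ := by
  apply eq_inv_of_mul_eq_one_left
  rw [← gpow_val_add hu, neg_add_cancel, ZMod.val_zero, pow_zero]
end grouppow

private lemma cswap' {G : Type*} [Group G] {x y : G} (h : x * y = y * x) (c : G) :
    x * (y * c) = y * (x * c) := by rw [← mul_assoc, h, mul_assoc]

/-- Inverting a product of three pairwise-commuting elements factorwise. -/
lemma inv3 {G : Type*} [Group G] {x y z w : G} (hxy : x*y = y*x) (hxz : x*z = z*x)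
    (hyz : y*z = z*y) (h : x*(y*z) = w) : x⁻¹*(y⁻¹*z⁻¹) = w⁻¹ := by
  rw [← h, mul_inv_rev, mul_inv_rev]
  have hyx : y⁻¹ * x⁻¹ = x⁻¹ * y⁻¹ := (Commute.inv_inv hxy).eq.symm
  have hzx : z⁻¹ * x⁻¹ = x⁻¹ * z⁻¹ := (Commute.inv_inv hxz).eq.symm
  have hzy : z⁻¹ * y⁻¹ = y⁻¹ * z⁻¹ := (Commute.inv_inv hyz).eq.symm
  rw [mul_assoc, cswap' hzy, hzx, cswap' hyx]

section sc
variable {H : Type} [NormedAddCommGroup H] [InnerProductSpace ℂ H]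

/-- The scalars, as units of the algebra of operators. -/
noncomputable def Sc (H : Type) [NormedAddCommGroup H] [InnerProductSpace ℂ H] :
    ℂˣ →* (H →L[ℂ] H)ˣ :=
  Units.map (algebraMap ℂ (H →L[ℂ] H)).toMonoidHom

lemma Sc_central (c : ℂˣ) (g : (H →L[ℂ] H)ˣ) : Sc H c * g = g * Sc H c := by
  apply Units.ext
  simp only [Units.val_mul, Sc, Units.coe_map, RingHom.toMonoidHom_eq_coe, MonoidHom.coe_coe]
  exact Algebra.commutes _ _

lemma Sc_inj [Nontrivial H] {c c' : ℂˣ} (h : Sc H c = Sc H c') : c = c' := by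
  apply Units.ext
  obtain ⟨x, hx⟩ := exists_ne (0 : H)
  have h2 := congrArg (fun (u : (H →L[ℂ] H)ˣ) => (u : H →L[ℂ] H) x) h
  simp only [Sc, Units.coe_map, RingHom.toMonoidHom_eq_coe, MonoidHom.coe_coe,
    Algebra.algebraMap_eq_smul_one] at h2
  have h3 : (c : ℂ) • x = (c' : ℂ) • x := by simpa using h2
  have h4 : ((c : ℂ) - (c' : ℂ)) • x = 0 := by rw [sub_smul, h3, sub_self]
  rcases smul_eq_zero.1 h4 with h5 | h5
  · exact sub_eq_zero.1 h5
  · exact absurd h5 hx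

variable {d : ℕ} [NeZero d]

/-- `chi` as a map into the units of `ℂ`. -/
noncomputable def chiu (d : ℕ) [NeZero d] (v : ZMod d) : ℂˣ :=
  Units.mk0 (chi d v) (chi_ne_zero v)

@[simp] lemma chiu_val (v : ZMod d) : (chiu d v : ℂ) = chi d v := rfl

lemma chiu_add (v w : ZMod d) : chiu d (v + w) = chiu d v * chiu d w :=
  Units.ext (by simp [chi_add])

lemma chiu_neg (v : ZMod d) : chiu d (-v) = (chiu d v)⁻¹ := by
  apply Units.ext
  simp [chi_neg]

lemma Sc_chiu_val (v : ZMod d) :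
    ((Sc H (chiu d v) : (H →L[ℂ] H)ˣ) : H →L[ℂ] H) = chi d v • 1 := by
  simp only [Sc, Units.coe_map, RingHom.toMonoidHom_eq_coe, MonoidHom.coe_coe, chiu_val,
    Algebra.algebraMap_eq_smul_one]
end sc

section easy
variable {d : ℕ} [NeZero d]

lemma listprod_smul_one {E : Type*} [Ring E] [Algebra ℂ E] :
    ∀ {n : ℕ} (f : Fin n → ℂ),
      (List.ofFn fun j => f j • (1 : E)).prod = (∏ j, f j) • 1
  | 0, f => by simp
  | (n+1), f => by
      rw [List.ofFn_succ, List.prod_cons, listprod_smul_one (fun j => f j.succ),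
        Fin.prod_univ_succ, smul_mul_smul_comm, one_mul]

lemma prod_chi {n : ℕ} (f : Fin n → ZMod d) :
    (∏ j, chi d (f j)) = chi d (∑ j, f j) := by
  induction n with
  | zero => simp [chi_zero]
  | succ n ih =>
      rw [Fin.prod_univ_succ, Fin.sum_univ_succ, chi_add, ih]

lemma quantum_of_classical {m n : ℕ} (M : Matrix (Fin m) (Fin n) (ZMod d))
    (b : Fin m → ZMod d) (x : Fin n → ZMod d) (hx : M.mulVec x = b) :
    HasQuantumSolution d M b := by
  refine ⟨ℂ, inferInstance, inferInstance, inferInstance, inferInstance,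
    fun j => chi d (x j) • 1, ?_, ?_, ?_⟩
  · intro i
    rw [smul_pow, one_pow, chi_pow_d, one_smul]
  · intro j k _
    unfold Commute SemiconjBy
    rw [smul_mul_smul_comm, smul_mul_smul_comm, mul_comm (chi d (x j)), mul_one]
  · intro i
    have h1 : ∀ j, (chi d (x j) • (1 : ℂ →L[ℂ] ℂ)) ^ (M i j).val
        = (chi d (M i j * x j)) • 1 := by
      intro j; rw [smul_pow, one_pow, chi_natpow]
    calc (List.ofFn fun j => (chi d (x j) • (1:ℂ →L[ℂ] ℂ)) ^ (M i j).val).prod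
        = (List.ofFn fun j => (chi d (M i j * x j)) • (1:ℂ →L[ℂ] ℂ)).prod := by
          simp only [h1]
      _ = (∏ j, chi d (M i j * x j)) • 1 := listprod_smul_one _
      _ = rootOfUnity d ^ (b i).val • 1 := by
          rw [prod_chi, show (∑ j, M i j * x j) = b i from ?_]
          · rfl
          · rw [← hx]; rfl
end easy

section classical
variable {d : ℕ}

/-- Solve a 2x2 system with "odd" sign minor, `d` odd. -/
lemma solve2 (inv2 e f g h X Y : ZMod d) (h2 : 2 * inv2 = 1)
    (he : e*e = 1) (hf : f*f = 1) (hg : g*g = 1) (hh : h*h = 1)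
    (hm : e*f*g*h = -1) :
    ∃ w0 w1, e*w0 + g*w1 = X ∧ f*w0 + h*w1 = Y := by
  have hgh : g*h = -(e*f) := by
    linear_combination (e*f)*hm + (-(f*f*g*h))*he + (-(g*h))*hf
  refine ⟨inv2*e*(X + e*f*Y), inv2*g*(X - e*f*Y), ?_, ?_⟩
  · linear_combination (inv2*(X + e*f*Y))*he + (inv2*(X - e*f*Y))*hg + X*h2
  · linear_combination (inv2*X - inv2*e*f*Y)*hgh + (2*inv2*f*f*Y)*he + (2*inv2*Y)*hf + Y*h2

/-- Grid solvability, odd minor in rows {0,1}, cols {0,1}. -/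
lemma grid_base (inv2 : ZMod d) (e0 e1 e2 e3 e4 e5 e6 e7 e8 : ZMod d)
    (b0 b1 b2 c0 c1 c2 : ZMod d) (h2 : 2 * inv2 = 1)
    (s0 : e0*e0 = 1) (s1 : e1*e1 = 1) (s2 : e2*e2 = 1) (s3 : e3*e3 = 1)
    (s4 : e4*e4 = 1) (s8 : e8*e8 = 1)
    (hm : e0*e1*e3*e4 = -1) :
    ∃ y0 y1 y2 y3 y4 y5 y6 y7 y8 : ZMod d,
      y0 + y1 + y2 = b0 ∧ y3 + y4 + y5 = b1 ∧ y6 + y7 + y8 = b2 ∧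
      e0*y0 + e3*y3 + e6*y6 = c0 ∧ e1*y1 + e4*y4 + e7*y7 = c1 ∧
      e2*y2 + e5*y5 + e8*y8 = c2 := by
  set y2v : ZMod d := e2*(c2 - e8*b2) with hy2
  set E : ZMod d := e1*(b0 - y2v) + e4*b1 - c1 with hE
  obtain ⟨w0, w1, hw1, hw2⟩ := solve2 inv2 e0 e1 e3 e4 c0 E h2 s0 s1 s3 s4 hm
  refine ⟨w0, b0 - y2v - w0, y2v, w1, b1 - w1, 0, 0, 0, b2, by ring, by ring, by ring,
    ?_, ?_, ?_⟩
  · linear_combination hw1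
  · linear_combination (-1 : ZMod d)*hw2
  · linear_combination (c2 - e8*b2)*s2
end classical

section classical2
variable {d : ℕ}

lemma grid_nonrank1 (inv2 : ZMod d) (e0 e1 e2 e3 e4 e5 e6 e7 e8 : ZMod d)
    (b0 b1 b2 c0 c1 c2 : ZMod d) (h2 : 2 * inv2 = 1)
    (s0 : e0*e0 = 1) (s1 : e1*e1 = 1) (s2 : e2*e2 = 1) (s3 : e3*e3 = 1)
    (s4 : e4*e4 = 1) (s5 : e5*e5 = 1) (s6 : e6*e6 = 1) (s7 : e7*e7 = 1)
    (s8 : e8*e8 = 1)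
    (hm : e0*e1*e3*e4 = -1 ∨ e0*e2*e3*e5 = -1 ∨ e0*e1*e6*e7 = -1 ∨ e0*e2*e6*e8 = -1) :
    ∃ y0 y1 y2 y3 y4 y5 y6 y7 y8 : ZMod d,
      y0 + y1 + y2 = b0 ∧ y3 + y4 + y5 = b1 ∧ y6 + y7 + y8 = b2 ∧
      e0*y0 + e3*y3 + e6*y6 = c0 ∧ e1*y1 + e4*y4 + e7*y7 = c1 ∧
      e2*y2 + e5*y5 + e8*y8 = c2 := by
  rcases hm with hm | hm | hm | hm
  · exact grid_base inv2 e0 e1 e2 e3 e4 e5 e6 e7 e8 b0 b1 b2 c0 c1 c2 h2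
      s0 s1 s2 s3 s4 s8 hm
  · obtain ⟨y0,y1,y2,y3,y4,y5,y6,y7,y8,r0,r1,r2,k0,k1,k2⟩ :=
      grid_base inv2 e0 e2 e1 e3 e5 e4 e6 e8 e7 b0 b1 b2 c0 c2 c1 h2
        s0 s2 s1 s3 s5 s7 hm
    exact ⟨y0, y2, y1, y3, y5, y4, y6, y8, y7, by linear_combination r0,
      by linear_combination r1, by linear_combination r2, by linear_combination k0,
      by linear_combination k2, by linear_combination k1⟩
  · obtain ⟨y0,y1,y2,y3,y4,y5,y6,y7,y8,r0,r1,r2,k0,k1,k2⟩ :=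
      grid_base inv2 e0 e1 e2 e6 e7 e8 e3 e4 e5 b0 b2 b1 c0 c1 c2 h2
        s0 s1 s2 s6 s7 s5 hm
    exact ⟨y0, y1, y2, y6, y7, y8, y3, y4, y5, by linear_combination r0,
      by linear_combination r2, by linear_combination r1, by linear_combination k0,
      by linear_combination k1, by linear_combination k2⟩
  · obtain ⟨y0,y1,y2,y3,y4,y5,y6,y7,y8,r0,r1,r2,k0,k1,k2⟩ :=
      grid_base inv2 e0 e2 e1 e6 e8 e7 e3 e5 e4 b0 b2 b1 c0 c2 c1 h2
        s0 s2 s1 s6 s8 s4 hm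
    exact ⟨y0, y2, y1, y6, y8, y7, y3, y5, y4, by linear_combination r0,
      by linear_combination r2, by linear_combination r1, by linear_combination k0,
      by linear_combination k2, by linear_combination k1⟩

lemma grid_rank1 (e0 e1 e2 e3 e4 e5 e6 e7 e8 : ZMod d)
    (b0 b1 b2 c0 c1 c2 : ZMod d)
    (s0 : e0*e0 = 1) (s1 : e1*e1 = 1) (s2 : e2*e2 = 1) (s3 : e3*e3 = 1)
    (s6 : e6*e6 = 1)
    (r4 : e4 = e3*e0*e1) (r5 : e5 = e3*e0*e2) (r7 : e7 = e6*e0*e1) (r8 : e8 = e6*e0*e2)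
    (cond : e0*b0 + e3*b1 + e6*b2 = c0 + e0*e1*c1 + e0*e2*c2) :
    ∃ y0 y1 y2 y3 y4 y5 y6 y7 y8 : ZMod d,
      y0 + y1 + y2 = b0 ∧ y3 + y4 + y5 = b1 ∧ y6 + y7 + y8 = b2 ∧
      e0*y0 + e3*y3 + e6*y6 = c0 ∧ e1*y1 + e4*y4 + e7*y7 = c1 ∧
      e2*y2 + e5*y5 + e8*y8 = c2 := by
  refine ⟨0, 0, b0, 0, 0, b1, e6*c0, e6*(e0*e1*c1), b2 - e6*c0 - e6*e0*e1*c1,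
    by ring, by ring, by ring, ?_, ?_, ?_⟩
  · linear_combination c0*s6
  · subst r7
    linear_combination (e0*e0*e1*e1*c1)*s6 + (e1*e1*c1)*s0 + c1*s1
  · subst r5; subst r8
    linear_combination (e0*e2)*cond + (-(e2*b0) + e2*e2*c2)*s0 +
      (-(e0*e2*c0) - e0*e0*e1*e2*c1)*s6 + c2*s2

lemma sum_univ_nine {β : Type*} [AddCommMonoid β] (f : Fin 9 → β) :
    ∑ i, f i = f 0 + f 1 + f 2 + f 3 + f 4 + f 5 + f 6 + f 7 + f 8 := by
  rw [Fin.sum_univ_castSucc, Fin.sum_univ_eight]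
  rfl

section msm
variable {d : ℕ} (a a' : Fin 9 → ZMod d) (x : Fin 9 → ZMod d)

lemma msm_mv0 : (magicSquareMatrix a a').mulVec x 0 = a 0 * x 0 + a 1 * x 1 + a 2 * x 2 := by
  have h : (magicSquareMatrix a a').mulVec x 0
      = ∑ j, magicSquareMatrix a a' 0 j * x j := rfl
  rw [h, sum_univ_nine]
  show a 0 * x 0 + a 1 * x 1 + a 2 * x 2 + 0 * x 3 + 0 * x 4 + 0 * x 5 + 0 * x 6
      + 0 * x 7 + 0 * x 8 = _
  ring

lemma msm_mv1 : (magicSquareMatrix a a').mulVec x 1 = a 3 * x 3 + a 4 * x 4 + a 5 * x 5 := by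
  have h : (magicSquareMatrix a a').mulVec x 1
      = ∑ j, magicSquareMatrix a a' 1 j * x j := rfl
  rw [h, sum_univ_nine]
  show 0 * x 0 + 0 * x 1 + 0 * x 2 + a 3 * x 3 + a 4 * x 4 + a 5 * x 5 + 0 * x 6
      + 0 * x 7 + 0 * x 8 = _
  ring

lemma msm_mv2 : (magicSquareMatrix a a').mulVec x 2 = a 6 * x 6 + a 7 * x 7 + a 8 * x 8 := by
  have h : (magicSquareMatrix a a').mulVec x 2
      = ∑ j, magicSquareMatrix a a' 2 j * x j := rfl
  rw [h, sum_univ_nine]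
  show 0 * x 0 + 0 * x 1 + 0 * x 2 + 0 * x 3 + 0 * x 4 + 0 * x 5 + a 6 * x 6
      + a 7 * x 7 + a 8 * x 8 = _
  ring

lemma msm_mv3 : (magicSquareMatrix a a').mulVec x 3 = a' 0 * x 0 + a' 3 * x 3 + a' 6 * x 6 := by
  have h : (magicSquareMatrix a a').mulVec x 3
      = ∑ j, magicSquareMatrix a a' 3 j * x j := rfl
  rw [h, sum_univ_nine]
  show a' 0 * x 0 + 0 * x 1 + 0 * x 2 + a' 3 * x 3 + 0 * x 4 + 0 * x 5 + a' 6 * x 6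
      + 0 * x 7 + 0 * x 8 = _
  ring

lemma msm_mv4 : (magicSquareMatrix a a').mulVec x 4 = a' 1 * x 1 + a' 4 * x 4 + a' 7 * x 7 := by
  have h : (magicSquareMatrix a a').mulVec x 4
      = ∑ j, magicSquareMatrix a a' 4 j * x j := rfl
  rw [h, sum_univ_nine]
  show 0 * x 0 + a' 1 * x 1 + 0 * x 2 + 0 * x 3 + a' 4 * x 4 + 0 * x 5 + 0 * x 6
      + a' 7 * x 7 + 0 * x 8 = _
  ring

lemma msm_mv5 : (magicSquareMatrix a a').mulVec x 5 = a' 2 * x 2 + a' 5 * x 5 + a' 8 * x 8 := by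
  have h : (magicSquareMatrix a a').mulVec x 5
      = ∑ j, magicSquareMatrix a a' 5 j * x j := rfl
  rw [h, sum_univ_nine]
  show 0 * x 0 + 0 * x 1 + a' 2 * x 2 + 0 * x 3 + 0 * x 4 + a' 5 * x 5 + 0 * x 6
      + 0 * x 7 + a' 8 * x 8 = _
  ring
end msm

lemma classical_of_grid {d : ℕ} (a a' : Fin 9 → ZMod d) (b : Fin 6 → ZMod d)
    (haa : ∀ j, a j * a j = 1)
    (y : Fin 9 → ZMod d)
    (h0 : y 0 + y 1 + y 2 = b 0) (h1 : y 3 + y 4 + y 5 = b 1) (h2 : y 6 + y 7 + y 8 = b 2)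
    (h3 : (a' 0 * a 0)*y 0 + (a' 3 * a 3)*y 3 + (a' 6 * a 6)*y 6 = b 3)
    (h4 : (a' 1 * a 1)*y 1 + (a' 4 * a 4)*y 4 + (a' 7 * a 7)*y 7 = b 4)
    (h5 : (a' 2 * a 2)*y 2 + (a' 5 * a 5)*y 5 + (a' 8 * a 8)*y 8 = b 5) :
    ∃ x : Fin 9 → ZMod d, (magicSquareMatrix a a').mulVec x = b := by
  refine ⟨fun j => a j * y j, ?_⟩
  funext i
  fin_cases i
  · rw [show (⟨0, by omega⟩ : Fin 6) = 0 from rfl, msm_mv0]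
    linear_combination h0 + (y 0)*(haa 0) + (y 1)*(haa 1) + (y 2)*(haa 2)
  · rw [show (⟨1, by omega⟩ : Fin 6) = 1 from rfl, msm_mv1]
    linear_combination h1 + (y 3)*(haa 3) + (y 4)*(haa 4) + (y 5)*(haa 5)
  · rw [show (⟨2, by omega⟩ : Fin 6) = 2 from rfl, msm_mv2]
    linear_combination h2 + (y 6)*(haa 6) + (y 7)*(haa 7) + (y 8)*(haa 8)
  · rw [show (⟨3, by omega⟩ : Fin 6) = 3 from rfl, msm_mv3]
    linear_combination h3
  · rw [show (⟨4, by omega⟩ : Fin 6) = 4 from rfl, msm_mv4]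
    linear_combination h4
  · rw [show (⟨5, by omega⟩ : Fin 6) = 5 from rfl, msm_mv5]
    linear_combination h5

/-- rows/columns with a ±1 sign raised on all exponents. -/
lemma row_sign {G : Type*} [Group G] {d : ℕ} [NeZero d] (ι : ℂˣ →* G)
    (u0 u1 u2 : G) (hu0 : u0 ^ d = 1) (hu1 : u1 ^ d = 1) (hu2 : u2 ^ d = 1)
    (c01 : Commute u0 u1) (c02 : Commute u0 u2) (c12 : Commute u1 u2)
    (v0 v1 v2 w : ZMod d)
    (h : u0 ^ v0.val * (u1 ^ v1.val * u2 ^ v2.val) = ι (chiu d w))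
    (s : ZMod d) (hs : s = 1 ∨ s = -1) :
    u0 ^ (s * v0).val * (u1 ^ (s * v1).val * u2 ^ (s * v2).val) = ι (chiu d (s * w)) := by
  rcases hs with hs | hs <;> subst hs
  · simpa only [one_mul] using h
  · rw [show (-1 : ZMod d) * v0 = -v0 by ring, show (-1 : ZMod d) * v1 = -v1 by ring,
      show (-1 : ZMod d) * v2 = -v2 by ring, show (-1 : ZMod d) * w = -w by ring,
      gpow_val_neg hu0, gpow_val_neg hu1, gpow_val_neg hu2, chiu_neg, map_inv]
    exact inv3 ((c01.pow_pow _ _).eq) ((c02.pow_pow _ _).eq) ((c12.pow_pow _ _).eq) h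


lemma sign_neq {d : ℕ} {u v : ZMod d} (hu : u = 1 ∨ u = -1) (hv : v = 1 ∨ v = -1)
    (hne : u ≠ v) : u * v = -1 := by
  rcases hu with h | h <;> rcases hv with h' | h'
  · exact absurd (h.trans h'.symm) hne
  · rw [h, h']; ring
  · rw [h, h']; ring
  · exact absurd (h.trans h'.symm) hne

lemma pm_mul {d : ℕ} {x y : ZMod d} (hx : x = 1 ∨ x = -1) (hy : y = 1 ∨ y = -1) :
    x * y = 1 ∨ x * y = -1 := by
  rcases hx with h | h <;> rcases hy with h' | h' <;> rw [h, h'] <;> simp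

lemma quantum_rank1_cond (d : ℕ) (hd : Odd d) (hd1 : 1 < d)
    (a a' : Fin 9 → ZMod d)
    (ha : ∀ i, a i = 1 ∨ a i = -1) (ha' : ∀ i, a' i = 1 ∨ a' i = -1)
    (b : Fin 6 → ZMod d)
    {H : Type} [NormedAddCommGroup H] [InnerProductSpace ℂ H] [Nontrivial H]
    (A : Fin 9 → H →L[ℂ] H) (hq : IsQuantumSolution d (magicSquareMatrix a a') b A)
    (r4 : a' 4 * a 4 = (a' 3 * a 3) * ((a' 0 * a 0) * (a' 1 * a 1)))
    (r5 : a' 5 * a 5 = (a' 3 * a 3) * ((a' 0 * a 0) * (a' 2 * a 2)))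
    (r7 : a' 7 * a 7 = (a' 6 * a 6) * ((a' 0 * a 0) * (a' 1 * a 1)))
    (r8 : a' 8 * a 8 = (a' 6 * a 6) * ((a' 0 * a 0) * (a' 2 * a 2))) :
    (a' 0 * a 0) * b 0 + (a' 3 * a 3) * b 1 + (a' 6 * a 6) * b 2
      = ((a' 0 * a 0) * (a' 0 * a 0)) * b 3 + ((a' 0 * a 0) * (a' 1 * a 1)) * b 4
        + ((a' 0 * a 0) * (a' 2 * a 2)) * b 5 := by
  obtain ⟨hA1, hA2, hA3⟩ := hq
  haveI : NeZero d := ⟨by omega⟩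
  haveI : Fact (1 < d) := ⟨hd1⟩
  have hd0 : 0 < d := by omega
  have haa : ∀ j, a j * a j = 1 := by
    intro j; rcases ha j with h | h <;> rw [h] <;> ring
  have ha'a' : ∀ j, a' j * a' j = 1 := by
    intro j; rcases ha' j with h | h <;> rw [h] <;> ring
  have hne : ∀ j, a j ≠ 0 := by
    intro j; rcases ha j with h | h <;> rw [h]
    · exact one_ne_zero
    · simp only [ne_eq, neg_eq_zero]; exact one_ne_zero
  have hne' : ∀ j, a' j ≠ 0 := by
    intro j; rcases ha' j with h | h <;> rw [h]
    · exact one_ne_zero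
    · simp only [ne_eq, neg_eq_zero]; exact one_ne_zero
  have pm : ∀ j, a' j * a j = 1 ∨ a' j * a j = -1 := fun j => pm_mul (ha' j) (ha j)
  have se : ∀ j, (a' j * a j) * (a' j * a j) = 1 := by
    intro j; linear_combination (a j * a j) * (ha'a' j) + haa j
  -- units
  set U : Fin 9 → (H →L[ℂ] H)ˣ := fun j => powUnit d hd0 (A j) (hA1 j) with hUdef
  have hU : ∀ j, (U j : H →L[ℂ] H) = A j := fun j => powUnit_val _ _ _ _
  have hUd : ∀ j, U j ^ d = 1 := by
    intro j
    apply Units.ext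
    rw [Units.val_pow_eq_pow_val, hU, hA1, Units.val_one]
  have hcU : ∀ (j k : Fin 9),
      (∃ i, magicSquareMatrix a a' i j ≠ 0 ∧ magicSquareMatrix a a' i k ≠ 0) →
      Commute (U j) (U k) := by
    intro j k hw
    have h := hA2 j k hw
    apply Units.ext
    rw [Units.val_mul, Units.val_mul, hU, hU]
    exact h.eq
  -- commuting pairs
  have c01 : Commute (U 0) (U 1) := hcU 0 1 ⟨0, hne 0, hne 1⟩
  have c02 : Commute (U 0) (U 2) := hcU 0 2 ⟨0, hne 0, hne 2⟩
  have c12 : Commute (U 1) (U 2) := hcU 1 2 ⟨0, hne 1, hne 2⟩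
  have c34 : Commute (U 3) (U 4) := hcU 3 4 ⟨1, hne 3, hne 4⟩
  have c35 : Commute (U 3) (U 5) := hcU 3 5 ⟨1, hne 3, hne 5⟩
  have c45 : Commute (U 4) (U 5) := hcU 4 5 ⟨1, hne 4, hne 5⟩
  have c67 : Commute (U 6) (U 7) := hcU 6 7 ⟨2, hne 6, hne 7⟩
  have c68 : Commute (U 6) (U 8) := hcU 6 8 ⟨2, hne 6, hne 8⟩
  have c78 : Commute (U 7) (U 8) := hcU 7 8 ⟨2, hne 7, hne 8⟩
  have c03 : Commute (U 0) (U 3) := hcU 0 3 ⟨3, hne' 0, hne' 3⟩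
  have c06 : Commute (U 0) (U 6) := hcU 0 6 ⟨3, hne' 0, hne' 6⟩
  have c36 : Commute (U 3) (U 6) := hcU 3 6 ⟨3, hne' 3, hne' 6⟩
  have c14 : Commute (U 1) (U 4) := hcU 1 4 ⟨4, hne' 1, hne' 4⟩
  have c17 : Commute (U 1) (U 7) := hcU 1 7 ⟨4, hne' 1, hne' 7⟩
  have c47 : Commute (U 4) (U 7) := hcU 4 7 ⟨4, hne' 4, hne' 7⟩
  have c25 : Commute (U 2) (U 5) := hcU 2 5 ⟨5, hne' 2, hne' 5⟩
  have c28 : Commute (U 2) (U 8) := hcU 2 8 ⟨5, hne' 2, hne' 8⟩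
  have c58 : Commute (U 5) (U 8) := hcU 5 8 ⟨5, hne' 5, hne' 8⟩
  -- extract the six equations at the unit level
  have hrow0 := hA3 0
  rw [show (List.ofFn fun j => A j ^ ((magicSquareMatrix a a') 0 j).val)
      = [A 0 ^ (a 0).val, A 1 ^ (a 1).val, A 2 ^ (a 2).val, A 3 ^ (0:ZMod d).val,
         A 4 ^ (0:ZMod d).val, A 5 ^ (0:ZMod d).val, A 6 ^ (0:ZMod d).val,
         A 7 ^ (0:ZMod d).val, A 8 ^ (0:ZMod d).val] from rfl] at hrow0
  simp only [ZMod.val_zero, pow_zero, List.prod_cons, List.prod_nil, mul_one, one_mul]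
    at hrow0
  have E0 : U 0 ^ (a 0).val * (U 1 ^ (a 1).val * U 2 ^ (a 2).val)
      = Sc H (chiu d (b 0)) := by
    apply Units.ext
    rw [Units.val_mul, Units.val_mul, Units.val_pow_eq_pow_val, Units.val_pow_eq_pow_val,
      Units.val_pow_eq_pow_val, hU, hU, hU, Sc_chiu_val]
    exact hrow0
  have hrow1 := hA3 1
  rw [show (List.ofFn fun j => A j ^ ((magicSquareMatrix a a') 1 j).val)
      = [A 0 ^ (0:ZMod d).val, A 1 ^ (0:ZMod d).val, A 2 ^ (0:ZMod d).val,
         A 3 ^ (a 3).val, A 4 ^ (a 4).val, A 5 ^ (a 5).val, A 6 ^ (0:ZMod d).val,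
         A 7 ^ (0:ZMod d).val, A 8 ^ (0:ZMod d).val] from rfl] at hrow1
  simp only [ZMod.val_zero, pow_zero, List.prod_cons, List.prod_nil, mul_one, one_mul]
    at hrow1
  have E1 : U 3 ^ (a 3).val * (U 4 ^ (a 4).val * U 5 ^ (a 5).val)
      = Sc H (chiu d (b 1)) := by
    apply Units.ext
    rw [Units.val_mul, Units.val_mul, Units.val_pow_eq_pow_val, Units.val_pow_eq_pow_val,
      Units.val_pow_eq_pow_val, hU, hU, hU, Sc_chiu_val]
    exact hrow1
  have hrow2 := hA3 2
  rw [show (List.ofFn fun j => A j ^ ((magicSquareMatrix a a') 2 j).val)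
      = [A 0 ^ (0:ZMod d).val, A 1 ^ (0:ZMod d).val, A 2 ^ (0:ZMod d).val,
         A 3 ^ (0:ZMod d).val, A 4 ^ (0:ZMod d).val, A 5 ^ (0:ZMod d).val,
         A 6 ^ (a 6).val, A 7 ^ (a 7).val, A 8 ^ (a 8).val] from rfl] at hrow2
  simp only [ZMod.val_zero, pow_zero, List.prod_cons, List.prod_nil, mul_one, one_mul]
    at hrow2
  have E2 : U 6 ^ (a 6).val * (U 7 ^ (a 7).val * U 8 ^ (a 8).val)
      = Sc H (chiu d (b 2)) := by
    apply Units.ext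
    rw [Units.val_mul, Units.val_mul, Units.val_pow_eq_pow_val, Units.val_pow_eq_pow_val,
      Units.val_pow_eq_pow_val, hU, hU, hU, Sc_chiu_val]
    exact hrow2
  have hrow3 := hA3 3
  rw [show (List.ofFn fun j => A j ^ ((magicSquareMatrix a a') 3 j).val)
      = [A 0 ^ (a' 0).val, A 1 ^ (0:ZMod d).val, A 2 ^ (0:ZMod d).val,
         A 3 ^ (a' 3).val, A 4 ^ (0:ZMod d).val, A 5 ^ (0:ZMod d).val,
         A 6 ^ (a' 6).val, A 7 ^ (0:ZMod d).val, A 8 ^ (0:ZMod d).val] from rfl] at hrow3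
  simp only [ZMod.val_zero, pow_zero, List.prod_cons, List.prod_nil, mul_one, one_mul]
    at hrow3
  have E3 : U 0 ^ (a' 0).val * (U 3 ^ (a' 3).val * U 6 ^ (a' 6).val)
      = Sc H (chiu d (b 3)) := by
    apply Units.ext
    rw [Units.val_mul, Units.val_mul, Units.val_pow_eq_pow_val, Units.val_pow_eq_pow_val,
      Units.val_pow_eq_pow_val, hU, hU, hU, Sc_chiu_val]
    exact hrow3
  have hrow4 := hA3 4
  rw [show (List.ofFn fun j => A j ^ ((magicSquareMatrix a a') 4 j).val)
      = [A 0 ^ (0:ZMod d).val, A 1 ^ (a' 1).val, A 2 ^ (0:ZMod d).val,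
         A 3 ^ (0:ZMod d).val, A 4 ^ (a' 4).val, A 5 ^ (0:ZMod d).val,
         A 6 ^ (0:ZMod d).val, A 7 ^ (a' 7).val, A 8 ^ (0:ZMod d).val] from rfl] at hrow4
  simp only [ZMod.val_zero, pow_zero, List.prod_cons, List.prod_nil, mul_one, one_mul]
    at hrow4
  have E4 : U 1 ^ (a' 1).val * (U 4 ^ (a' 4).val * U 7 ^ (a' 7).val)
      = Sc H (chiu d (b 4)) := by
    apply Units.ext
    rw [Units.val_mul, Units.val_mul, Units.val_pow_eq_pow_val, Units.val_pow_eq_pow_val,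
      Units.val_pow_eq_pow_val, hU, hU, hU, Sc_chiu_val]
    exact hrow4
  have hrow5 := hA3 5
  rw [show (List.ofFn fun j => A j ^ ((magicSquareMatrix a a') 5 j).val)
      = [A 0 ^ (0:ZMod d).val, A 1 ^ (0:ZMod d).val, A 2 ^ (a' 2).val,
         A 3 ^ (0:ZMod d).val, A 4 ^ (0:ZMod d).val, A 5 ^ (a' 5).val,
         A 6 ^ (0:ZMod d).val, A 7 ^ (0:ZMod d).val, A 8 ^ (a' 8).val] from rfl] at hrow5
  simp only [ZMod.val_zero, pow_zero, List.prod_cons, List.prod_nil, mul_one, one_mul]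
    at hrow5
  have E5 : U 2 ^ (a' 2).val * (U 5 ^ (a' 5).val * U 8 ^ (a' 8).val)
      = Sc H (chiu d (b 5)) := by
    apply Units.ext
    rw [Units.val_mul, Units.val_mul, Units.val_pow_eq_pow_val, Units.val_pow_eq_pow_val,
      Units.val_pow_eq_pow_val, hU, hU, hU, Sc_chiu_val]
    exact hrow5

  -- rows with signs
  have R0 := row_sign (Sc H) (U 0) (U 1) (U 2) (hUd 0) (hUd 1) (hUd 2) c01 c02 c12
    (a 0) (a 1) (a 2) (b 0) E0 (a' 0 * a 0) (pm 0)
  have R1 := row_sign (Sc H) (U 3) (U 4) (U 5) (hUd 3) (hUd 4) (hUd 5) c34 c35 c45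
    (a 3) (a 4) (a 5) (b 1) E1 (a' 3 * a 3) (pm 3)
  have R2 := row_sign (Sc H) (U 6) (U 7) (U 8) (hUd 6) (hUd 7) (hUd 8) c67 c68 c78
    (a 6) (a 7) (a 8) (b 2) E2 (a' 6 * a 6) (pm 6)
  -- rewrite the column coefficients
  have q0 : a' 0 = ((a' 0 * a 0) * (a' 0 * a 0)) * ((a' 0 * a 0) * a 0) := by
    linear_combination (-(a' 0))*(haa 0) + (-(a 0 * (a' 0 * a 0)))*(se 0)
  have q3 : a' 3 = ((a' 0 * a 0) * (a' 0 * a 0)) * ((a' 3 * a 3) * a 3) := by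
    linear_combination (-(a' 3))*(haa 3) + (-(a 3 * (a' 3 * a 3)))*(se 0)
  have q6 : a' 6 = ((a' 0 * a 0) * (a' 0 * a 0)) * ((a' 6 * a 6) * a 6) := by
    linear_combination (-(a' 6))*(haa 6) + (-(a 6 * (a' 6 * a 6)))*(se 0)
  have q1 : a' 1 = ((a' 0 * a 0) * (a' 1 * a 1)) * ((a' 0 * a 0) * a 1) := by
    linear_combination (-(a' 1))*(haa 1) + (-(a 1 * (a' 1 * a 1)))*(se 0)
  have q4 : a' 4 = ((a' 0 * a 0) * (a' 1 * a 1)) * ((a' 3 * a 3) * a 4) := by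
    linear_combination (-(a' 4))*(haa 4) + (a 4)*r4
  have q7 : a' 7 = ((a' 0 * a 0) * (a' 1 * a 1)) * ((a' 6 * a 6) * a 7) := by
    linear_combination (-(a' 7))*(haa 7) + (a 7)*r7
  have q2 : a' 2 = ((a' 0 * a 0) * (a' 2 * a 2)) * ((a' 0 * a 0) * a 2) := by
    linear_combination (-(a' 2))*(haa 2) + (-(a 2 * (a' 2 * a 2)))*(se 0)
  have q5 : a' 5 = ((a' 0 * a 0) * (a' 2 * a 2)) * ((a' 3 * a 3) * a 5) := by
    linear_combination (-(a' 5))*(haa 5) + (a 5)*r5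
  have q8 : a' 8 = ((a' 0 * a 0) * (a' 2 * a 2)) * ((a' 6 * a 6) * a 8) := by
    linear_combination (-(a' 8))*(haa 8) + (a 8)*r8
  rw [q0, q3, q6] at E3
  rw [q1, q4, q7] at E4
  rw [q2, q5, q8] at E5
  -- columns with signs
  have Cc0 := row_sign (Sc H) (U 0) (U 3) (U 6) (hUd 0) (hUd 3) (hUd 6) c03 c06 c36
    _ _ _ (b 3) E3 ((a' 0 * a 0) * (a' 0 * a 0)) (pm_mul (pm 0) (pm 0))
  have Cc1 := row_sign (Sc H) (U 1) (U 4) (U 7) (hUd 1) (hUd 4) (hUd 7) c14 c17 c47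
    _ _ _ (b 4) E4 ((a' 0 * a 0) * (a' 1 * a 1)) (pm_mul (pm 0) (pm 1))
  have Cc2 := row_sign (Sc H) (U 2) (U 5) (U 8) (hUd 2) (hUd 5) (hUd 8) c25 c28 c58
    _ _ _ (b 5) E5 ((a' 0 * a 0) * (a' 2 * a 2)) (pm_mul (pm 0) (pm 2))
  -- collapse the doubled signs in the column equations
  have w0 : ∀ X : ZMod d, ((a' 0 * a 0) * (a' 0 * a 0)) * (((a' 0 * a 0) * (a' 0 * a 0)) * X)
      = X := by
    intro X
    linear_combination (X * ((a' 0 * a 0)*(a' 0 * a 0) + 1)) * (se 0)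
  have w1 : ∀ X : ZMod d, ((a' 0 * a 0) * (a' 1 * a 1)) * (((a' 0 * a 0) * (a' 1 * a 1)) * X)
      = X := by
    intro X
    linear_combination (X * (a' 1 * a 1) * (a' 1 * a 1)) * (se 0) + X * (se 1)
  have w2 : ∀ X : ZMod d, ((a' 0 * a 0) * (a' 2 * a 2)) * (((a' 0 * a 0) * (a' 2 * a 2)) * X)
      = X := by
    intro X
    linear_combination (X * (a' 2 * a 2) * (a' 2 * a 2)) * (se 0) + X * (se 2)
  rw [w0 ((a' 0 * a 0) * a 0), w0 ((a' 3 * a 3) * a 3), w0 ((a' 6 * a 6) * a 6)] at Cc0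
  rw [w1 ((a' 0 * a 0) * a 1), w1 ((a' 3 * a 3) * a 4), w1 ((a' 6 * a 6) * a 7)] at Cc1
  rw [w2 ((a' 0 * a 0) * a 2), w2 ((a' 3 * a 3) * a 5), w2 ((a' 6 * a 6) * a 8)] at Cc2
  -- the core algebraic identity
  have key := magic_core (Sc H) Sc_central
    (U 0 ^ ((a' 0 * a 0) * a 0).val) (U 1 ^ ((a' 0 * a 0) * a 1).val)
    (U 2 ^ ((a' 0 * a 0) * a 2).val)
    (U 3 ^ ((a' 3 * a 3) * a 3).val) (U 4 ^ ((a' 3 * a 3) * a 4).val)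
    (U 5 ^ ((a' 3 * a 3) * a 5).val)
    (U 6 ^ ((a' 6 * a 6) * a 6).val) (U 7 ^ ((a' 6 * a 6) * a 7).val)
    (U 8 ^ ((a' 6 * a 6) * a 8).val)
    (chiu d ((a' 0 * a 0) * b 0)) (chiu d ((a' 3 * a 3) * b 1)) (chiu d ((a' 6 * a 6) * b 2))
    (chiu d (((a' 0 * a 0) * (a' 0 * a 0)) * b 3))
    (chiu d (((a' 0 * a 0) * (a' 1 * a 1)) * b 4))
    (chiu d (((a' 0 * a 0) * (a' 2 * a 2)) * b 5))
    ((c01.pow_pow _ _).eq) ((c03.pow_pow _ _).eq) ((c14.pow_pow _ _).eq)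
    ((c34.pow_pow _ _).eq) ((c25.pow_pow _ _).eq) ((c67.pow_pow _ _).eq)
    R0 R1 R2 Cc0 Cc1 Cc2
  -- back down to ℂ
  set Sv : ZMod d := (a' 0 * a 0) * b 0 + (a' 3 * a 3) * b 1 + (a' 6 * a 6) * b 2 with hSv
  set Tv : ZMod d := ((a' 0 * a 0) * (a' 0 * a 0)) * b 3 + ((a' 0 * a 0) * (a' 1 * a 1)) * b 4
      + ((a' 0 * a 0) * (a' 2 * a 2)) * b 5 with hTv
  have hc1 : chiu d ((a' 0 * a 0) * b 0) * chiu d ((a' 3 * a 3) * b 1)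
      * chiu d ((a' 6 * a 6) * b 2) = chiu d Sv := by
    rw [hSv, chiu_add, chiu_add]
  have hc2 : chiu d (((a' 0 * a 0) * (a' 0 * a 0)) * b 3)
      * chiu d (((a' 0 * a 0) * (a' 1 * a 1)) * b 4)
      * chiu d (((a' 0 * a 0) * (a' 2 * a 2)) * b 5) = chiu d Tv := by
    rw [hTv, chiu_add, chiu_add]
  rw [hc1, hc2] at key
  have hG : (chiu d Sv * (chiu d Tv)⁻¹) * (chiu d Sv * (chiu d Tv)⁻¹) = 1 := by
    apply Sc_inj (H := H)
    rw [map_one, ← key]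
  have hvv : ((chi d Sv * (chi d Tv)⁻¹) * (chi d Sv * (chi d Tv)⁻¹) : ℂ) = 1 := by
    have := congrArg (Units.val) hG
    simpa using this
  set ρ : ℂ := chi d Sv * (chi d Tv)⁻¹ with hρ
  have hρd : ρ ^ d = 1 := by
    rw [hρ, mul_pow, chi_pow_d, inv_pow, chi_pow_d, inv_one, one_mul]
  obtain ⟨k, hk⟩ := hd
  have hρ1 : ρ = 1 := by
    have h2 : ρ ^ d = ρ := by
      rw [hk, pow_succ, pow_mul, sq, hvv, one_pow, one_mul]
    rw [← hρd, h2]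
  have hchi : chi d Sv = chi d Tv := by
    rw [hρ] at hρ1
    exact (mul_inv_eq_one₀ (chi_ne_zero Tv)).mp hρ1
  exact chi_inj hchi

/-- for `d > 1` odd, a magic-square-form LCS over `ℤ_d` with all
coefficients in `{1, -1}` admits a quantum solution on some nonzero complex Hilbert space iff
it has a classical solution. -/
theorem magicSquare_quantum_iff_classical_odd (d : ℕ) (hd : Odd d) (hd1 : 1 < d)
    (a a' : Fin 9 → ZMod d) (ha : ∀ i, a i = 1 ∨ a i = -1) (ha' : ∀ i, a' i = 1 ∨ a' i = -1)
    (b : Fin 6 → ZMod d) :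
    HasQuantumSolution d (magicSquareMatrix a a') b ↔
      ∃ x : Fin 9 → ZMod d, (magicSquareMatrix a a').mulVec x = b := by
  haveI : NeZero d := ⟨by omega⟩
  have haa : ∀ j, a j * a j = 1 := by
    intro j; rcases ha j with h | h <;> rw [h] <;> ring
  have ha'a' : ∀ j, a' j * a' j = 1 := by
    intro j; rcases ha' j with h | h <;> rw [h] <;> ring
  have se : ∀ j, (a' j * a j) * (a' j * a j) = 1 := by
    intro j; linear_combination (a j * a j) * (ha'a' j) + haa j
  have pmj : ∀ j, a' j * a j = 1 ∨ a' j * a j = -1 := fun j => pm_mul (ha' j) (ha j)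
  constructor
  · rintro ⟨H, i1, i2, i3, i4, A, hq⟩
    letI := i1; letI := i2; letI := i3; letI := i4
    by_cases hR : (a' 4 * a 4 = (a' 3 * a 3) * ((a' 0 * a 0) * (a' 1 * a 1)))
        ∧ (a' 5 * a 5 = (a' 3 * a 3) * ((a' 0 * a 0) * (a' 2 * a 2)))
        ∧ (a' 7 * a 7 = (a' 6 * a 6) * ((a' 0 * a 0) * (a' 1 * a 1)))
        ∧ (a' 8 * a 8 = (a' 6 * a 6) * ((a' 0 * a 0) * (a' 2 * a 2)))
    · obtain ⟨r4, r5, r7, r8⟩ := hR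
      have hST := quantum_rank1_cond d hd hd1 a a' ha ha' b A hq r4 r5 r7 r8
      have cond : (a' 0 * a 0)*(b 0) + (a' 3 * a 3)*(b 1) + (a' 6 * a 6)*(b 2)
          = b 3 + (a' 0 * a 0)*(a' 1 * a 1)*(b 4) + (a' 0 * a 0)*(a' 2 * a 2)*(b 5) := by
        linear_combination hST + (b 3)*(se 0)
      obtain ⟨y0,y1,y2,y3,y4,y5,y6,y7,y8,g0,g1,g2,g3,g4,g5⟩ :=
        grid_rank1 (a' 0 * a 0) (a' 1 * a 1) (a' 2 * a 2) (a' 3 * a 3) (a' 4 * a 4)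
          (a' 5 * a 5) (a' 6 * a 6) (a' 7 * a 7) (a' 8 * a 8)
          (b 0) (b 1) (b 2) (b 3) (b 4) (b 5)
          (se 0) (se 1) (se 2) (se 3) (se 6)
          (by linear_combination r4) (by linear_combination r5)
          (by linear_combination r7) (by linear_combination r8) cond
      exact classical_of_grid a a' b haa ![y0,y1,y2,y3,y4,y5,y6,y7,y8] g0 g1 g2 g3 g4 g5
    · have hd2 : d % 2 = 1 := Nat.odd_iff.mp hd
      have e1 : (2 * ((d+1)/2) : ℕ) = d + 1 := by omega
      have h2 : (2 : ZMod d) * ((((d+1)/2 : ℕ) : ZMod d)) = 1 := by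
        calc (2 : ZMod d) * ((((d+1)/2 : ℕ)) : ZMod d)
            = ((2 * ((d+1)/2) : ℕ) : ZMod d) := by push_cast; ring
          _ = ((d + 1 : ℕ) : ZMod d) := by rw [e1]
          _ = 1 := by push_cast [ZMod.natCast_self]; ring
      have hmin : (a' 0 * a 0)*(a' 1 * a 1)*(a' 3 * a 3)*(a' 4 * a 4) = -1
          ∨ (a' 0 * a 0)*(a' 2 * a 2)*(a' 3 * a 3)*(a' 5 * a 5) = -1
          ∨ (a' 0 * a 0)*(a' 1 * a 1)*(a' 6 * a 6)*(a' 7 * a 7) = -1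
          ∨ (a' 0 * a 0)*(a' 2 * a 2)*(a' 6 * a 6)*(a' 8 * a 8) = -1 := by
        by_cases h4 : a' 4 * a 4 = (a' 3 * a 3) * ((a' 0 * a 0) * (a' 1 * a 1))
        · by_cases h5 : a' 5 * a 5 = (a' 3 * a 3) * ((a' 0 * a 0) * (a' 2 * a 2))
          · by_cases h7 : a' 7 * a 7 = (a' 6 * a 6) * ((a' 0 * a 0) * (a' 1 * a 1))
            · have h8 : ¬ (a' 8 * a 8 = (a' 6 * a 6) * ((a' 0 * a 0) * (a' 2 * a 2))) := by
                tauto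
              exact Or.inr (Or.inr (Or.inr (by
                linear_combination sign_neq (pmj 8)
                  (pm_mul (pmj 6) (pm_mul (pmj 0) (pmj 2))) h8)))
            · exact Or.inr (Or.inr (Or.inl (by
                linear_combination sign_neq (pmj 7)
                  (pm_mul (pmj 6) (pm_mul (pmj 0) (pmj 1))) h7)))
          · exact Or.inr (Or.inl (by
              linear_combination sign_neq (pmj 5)
                (pm_mul (pmj 3) (pm_mul (pmj 0) (pmj 2))) h5))
        · exact Or.inl (by
            linear_combination sign_neq (pmj 4)
              (pm_mul (pmj 3) (pm_mul (pmj 0) (pmj 1))) h4)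
      obtain ⟨y0,y1,y2,y3,y4,y5,y6,y7,y8,g0,g1,g2,g3,g4,g5⟩ :=
        grid_nonrank1 ((((d+1)/2 : ℕ) : ZMod d)) (a' 0 * a 0) (a' 1 * a 1) (a' 2 * a 2)
          (a' 3 * a 3) (a' 4 * a 4) (a' 5 * a 5) (a' 6 * a 6) (a' 7 * a 7) (a' 8 * a 8)
          (b 0) (b 1) (b 2) (b 3) (b 4) (b 5) h2
          (se 0) (se 1) (se 2) (se 3) (se 4) (se 5) (se 6) (se 7) (se 8) hmin
      exact classical_of_grid a a' b haa ![y0,y1,y2,y3,y4,y5,y6,y7,y8] g0 g1 g2 g3 g4 g5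
  · rintro ⟨x, hx⟩
    exact quantum_of_classical _ b x hx
end classical2
end
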